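/- arXiv:1308.0911 — 10 statements merged into one kernel-verified Lean document; each statement's English description precedes it below -/
import Mathlib

section
/- Let O be a bounded linear operator on a complex Hilbert space 𝓗, and let P₁, P₂ be bounded projections (P᷀ᵢ∘Pᵢ = Pᵢ) with P₁∘P₂ = P₂∘P₁ = P₂; write P̄ᵢ := 1 − Pᵢ. Suppose R is a bounded operator with P̄₁∘R∘P̄₁ = R and R∘(P̄₁∘O∘P̄₁) = P̄₁ = (P̄₁∘O∘P̄₁)∘R. Then P̄₁∘(P̄₂∘O∘P̄₂)∘P̄₁ = P̄₁∘O∘P̄₁ (so the same R witnesses invertibility of P̄₁(P̄₂OP̄₂)P̄₁ on the range of P̄₁), and the Feshbach–Schur maps satisfy F_{P₁}(P̄₂OP̄₂) = P̄₂∘F_{P₁}(O)∘P̄₂, i.e. P₁(P̄₂OP̄₂)P₁ − P₁(P̄₂OP̄₂)∘R∘(P̄₂OP̄₂)P₁ = P̄₂∘(P₁OP₁ − P₁O∘R∘OP₁)∘P̄₂. -/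
/-! Everything is an identity in the ring of operators. From `P₁ P₂ = P₂ = P₂ P₁` one gets
`P̄₁ P̄₂ = P̄₁ = P̄₂ P̄₁` and `[P₁, P̄₂] = 0`; since `R = P̄₁ R P̄₁`, also `P̄₂ R = R = R P̄₂`.
Hence the outer factors `P̄₂` of `P̄₂ O P̄₂` are absorbed by `P̄₁` in the first identity, and in
`F_{P₁}` they commute past `P₁` to the outside and are absorbed by `R` in the middle. -/

section Semigroup

variable {S : Type*} [Semigroup S]

theorem mul_eq_self_of_sandwich_left {q s r : S} (hqs : q * s = s) (hr : s * r * s = r) :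
    q * r = r := by
  rw [← hr, ← mul_assoc, ← mul_assoc, hqs]

theorem mul_eq_self_of_sandwich_right {q s r : S} (hsq : s * q = s) (hr : s * r * s = r) :
    r * q = r := by
  rw [← hr, mul_assoc, hsq]

theorem sandwich_sandwich_of_absorb {a b : S} (hab : a * b = a) (hba : b * a = a) (x : S) :
    a * (b * x * b) * a = a * x * a := by
  rw [← mul_assoc, ← mul_assoc, hab, mul_assoc, hba]

end Semigroup

section Ring

variable {A : Type*} [Ring A]

theorem one_sub_mul_one_sub_of_mul_eq_left {a b : A} (h : a * b = a) :
    (1 - a) * (1 - b) = 1 - b := by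
  simp only [sub_mul, mul_sub, one_mul, mul_one, h]
  abel

theorem one_sub_mul_one_sub_of_mul_eq_right {a b : A} (h : a * b = b) :
    (1 - a) * (1 - b) = 1 - a := by
  simp only [sub_mul, mul_sub, one_mul, mul_one, h]
  abel

/-- The Feshbach–Schur map `F_p(h) = p h p - p h r h p`, with `r` the inverse of `p̄ h p̄` on the
range of `p̄`. -/
def feshbachSchur (p r h : A) : A :=
  p * h * p - p * h * r * (h * p)

theorem feshbachSchur_sandwich {p q r : A} (hpq : Commute p q) (hqr : q * r = r)
    (hrq : r * q = r) (h : A) :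
    feshbachSchur p r (q * h * q) = q * feshbachSchur p r h * q := by
  have hr : q * r * q = r := by rw [hqr, hrq]
  have hmain : p * (q * h * q) * p = q * (p * h * p) * q :=
    calc p * (q * h * q) * p = (p * q) * h * (q * p) := by simp only [mul_assoc]
      _ = (q * p) * h * (p * q) := by rw [hpq.eq]
      _ = q * (p * h * p) * q := by simp only [mul_assoc]
  have hcorr : p * (q * h * q) * r * (q * h * q * p) = q * (p * h * r * (h * p)) * q :=
    calc p * (q * h * q) * r * (q * h * q * p) = (p * q) * h * (q * r * q) * h * (q * p) := by
          simp only [mul_assoc]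
      _ = (q * p) * h * r * h * (p * q) := by rw [hr, hpq.eq]
      _ = q * (p * h * r * (h * p)) * q := by simp only [mul_assoc]
  rw [feshbachSchur, feshbachSchur, hmain, hcorr, mul_sub, sub_mul]

end Ring

theorem feshbach_schur_commutes_with_projection_general
    {𝓗 : Type*} [NormedAddCommGroup 𝓗] [InnerProductSpace ℂ 𝓗]
    (O P₁ P₂ R : 𝓗 →L[ℂ] 𝓗)
    (hP₁₂ : P₁ * P₂ = P₂) (hP₂₁ : P₂ * P₁ = P₂)
    (hR : (1 - P₁) * R * (1 - P₁) = R) :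
    (1 - P₁) * ((1 - P₂) * O * (1 - P₂)) * (1 - P₁) = (1 - P₁) * O * (1 - P₁) ∧
    P₁ * ((1 - P₂) * O * (1 - P₂)) * P₁ -
        P₁ * ((1 - P₂) * O * (1 - P₂)) * R * (((1 - P₂) * O * (1 - P₂)) * P₁) =
      (1 - P₂) * (P₁ * O * P₁ - P₁ * O * R * (O * P₁)) * (1 - P₂) := by
  have h₁₂ : (1 - P₁) * (1 - P₂) = 1 - P₁ := one_sub_mul_one_sub_of_mul_eq_right hP₁₂
  have h₂₁ : (1 - P₂) * (1 - P₁) = 1 - P₁ := one_sub_mul_one_sub_of_mul_eq_left hP₂₁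
  have hcomm : Commute P₁ (1 - P₂) :=
    (Commute.one_right P₁).sub_right (hP₁₂.trans hP₂₁.symm)
  refine ⟨sandwich_sandwich_of_absorb h₁₂ h₂₁ O, ?_⟩
  exact feshbachSchur_sandwich hcomm (mul_eq_self_of_sandwich_left h₂₁ hR)
    (mul_eq_self_of_sandwich_right h₁₂ hR) O

/-- Commutation of the Feshbach–Schur map with a smaller projection.
Let `O` be a bounded operator on a complex Hilbert space `𝓗`, `P₁, P₂` bounded
projections with `P₁ P₂ = P₂ P₁ = P₂`, and write `P̄ᵢ = 1 - Pᵢ`.  If `R` is a bounded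
operator with `P̄₁ R P̄₁ = R` and `R (P̄₁ O P̄₁) = P̄₁ = (P̄₁ O P̄₁) R`, then
`P̄₁ (P̄₂ O P̄₂) P̄₁ = P̄₁ O P̄₁` and `F_{P₁}(P̄₂ O P̄₂) = P̄₂ F_{P₁}(O) P̄₂`. -/
theorem feshbach_schur_commutes_with_projection
    {𝓗 : Type*} [NormedAddCommGroup 𝓗] [InnerProductSpace ℂ 𝓗] [CompleteSpace 𝓗]
    (O P₁ P₂ R : 𝓗 →L[ℂ] 𝓗)
    (hP₁ : P₁ * P₁ = P₁) (hP₂ : P₂ * P₂ = P₂)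
    (hP₁₂ : P₁ * P₂ = P₂) (hP₂₁ : P₂ * P₁ = P₂)
    (hR : (1 - P₁) * R * (1 - P₁) = R)
    (hRl : R * ((1 - P₁) * O * (1 - P₁)) = 1 - P₁)
    (hRr : ((1 - P₁) * O * (1 - P₁)) * R = 1 - P₁) :
    (1 - P₁) * ((1 - P₂) * O * (1 - P₂)) * (1 - P₁) = (1 - P₁) * O * (1 - P₁) ∧
    P₁ * ((1 - P₂) * O * (1 - P₂)) * P₁ -
        P₁ * ((1 - P₂) * O * (1 - P₂)) * R * (((1 - P₂) * O * (1 - P₂)) * P₁) =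
      (1 - P₂) * (P₁ * O * P₁ - P₁ * O * R * (O * P₁)) * (1 - P₂) :=
  feshbach_schur_commutes_with_projection_general O P₁ P₂ R hP₁₂ hP₂₁ hR
end

section
/- (Invertibility transfer through the Feshbach–Schur map.) Let O be a bounded operator on a complex Hilbert space 𝓗, and let P₁, P₂ be bounded projections with P₁∘P₂ = P₂∘P₁ = P₂; write P̄ᵢ := 1 − Pᵢ. Suppose R is a bounded operator with P̄₁∘R∘P̄₁ = R and R∘(P̄₁∘O∘P̄₁) = P̄₁ = (P̄₁∘O∘P̄₁)∘R, and set F := F_{P₁}(O) = P₁OP₁ − P₁O∘R∘OP₁. If there exists a bounded operator S with (P₁P̄₂)∘S∘(P₁P̄₂) = S and S∘(P̄₂∘F∘P̄₂) = P₁P̄₂ = (P̄₂∘F∘P̄₂)∘S, then P̄₂∘O∘P̄₂ is invertible on the range of P̄₂, i.e. there exists a bounded operator T with P̄₂∘T∘P̄₂ = T and T∘(P̄₂OP̄₂) = P̄₂ = (P̄₂OP̄₂)∘T. -/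
/-!
With `e = P₁ P̄₂` and `f = P̄₁`, the projection `P̄₂ = e + f` splits into orthogonal idempotents,
so `P̄₂ O P̄₂` is a 2 × 2 block operator whose `f`-block is inverted by `R`. Its Schur complement
`e (O - O R O) e` is exactly `P̄₂ F P̄₂`, and the block-inverse formula
`T = R + (e - R O e) S (e - e O R)` inverts `P̄₂ O P̄₂` on the range of `P̄₂`.
-/

/-- `y` inverts `p * x * p` in the corner ring `p A p`. -/
structure IsCornerInverse {A : Type*} [Ring A] (p x y : A) : Prop where
  corner : p * y * p = y
  left : y * (p * x * p) = p
  right : p * x * p * y = p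

namespace IsCornerInverse

variable {A : Type*} [Ring A] {p x y : A}

theorem proj_mul (hp : IsIdempotentElem p) (h : IsCornerInverse p x y) : p * y = y := by
  rw [← h.corner, ← mul_assoc, ← mul_assoc, hp.eq]

theorem mul_proj (hp : IsIdempotentElem p) (h : IsCornerInverse p x y) : y * p = y := by
  rw [← h.corner, mul_assoc, hp.eq]

theorem mul_mul_proj (hp : IsIdempotentElem p) (h : IsCornerInverse p x y) :
    y * x * p = p := by
  have h' := h.left
  rwa [← mul_assoc, ← mul_assoc, h.mul_proj hp] at h'

theorem proj_mul_mul (hp : IsIdempotentElem p) (h : IsCornerInverse p x y) :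
    p * x * y = p := by
  have h' := h.right
  rwa [mul_assoc, h.proj_mul hp] at h'

theorem schur_complement_mul_proj (hp : IsIdempotentElem p) (h : IsCornerInverse p x y) :
    (x - x * y * x) * p = 0 := by
  rw [sub_mul, mul_assoc, mul_assoc, ← mul_assoc y, h.mul_mul_proj hp, sub_self]

theorem proj_mul_schur_complement (hp : IsIdempotentElem p) (h : IsCornerInverse p x y) :
    p * (x - x * y * x) = 0 := by
  rw [mul_sub, ← mul_assoc, ← mul_assoc, h.proj_mul_mul hp, sub_self]

variable {e f a r s : A}

theorem add_of_schur_complement (he : IsIdempotentElem e) (hf : IsIdempotentElem f)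
    (hef : e * f = 0) (hfe : f * e = 0) (hr : IsCornerInverse f a r)
    (hsl : s * (e * (a - a * r * a) * e) = e) (hsr : e * (a - a * r * a) * e * s = e) :
    IsCornerInverse (e + f) a (r + (e - r * a * e) * s * (e - e * a * r)) := by
  have hrf := hr.mul_proj hf
  have hfr := hr.proj_mul hf
  have hre : r * e = 0 := by rw [← hrf, mul_assoc, hfe, mul_zero]
  have her : e * r = 0 := by rw [← hfr, ← mul_assoc, hef, zero_mul]
  have hrq : r * (e + f) = r := by rw [mul_add, hre, hrf, zero_add]
  have hqr : (e + f) * r = r := by rw [add_mul, her, hfr, zero_add]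
  have heq : e * (e + f) = e := by rw [mul_add, he.eq, hef, add_zero]
  have hqe : (e + f) * e = e := by rw [add_mul, he.eq, hfe, add_zero]
  have hrow : (e - e * a * r) * ((e + f) * a * (e + f)) = e * (a - a * r * a) * e :=
    calc (e - e * a * r) * ((e + f) * a * (e + f))
        = (e * (e + f) - e * a * (r * (e + f))) * a * (e + f) := by noncomm_ring
      _ = e * (a - a * r * a) * (e + f) := by rw [heq, hrq]; noncomm_ring
      _ = e * (a - a * r * a) * e := by
        rw [mul_add, mul_assoc e _ f, hr.schur_complement_mul_proj hf, mul_zero, add_zero]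
  have hcol : (e + f) * a * (e + f) * (e - r * a * e) = e * (a - a * r * a) * e :=
    calc (e + f) * a * (e + f) * (e - r * a * e)
        = (e + f) * a * ((e + f) * e - (e + f) * r * a * e) := by noncomm_ring
      _ = (e + f) * (a - a * r * a) * e := by rw [hqe, hqr]; noncomm_ring
      _ = e * (a - a * r * a) * e := by
        rw [add_mul, add_mul, hr.proj_mul_schur_complement hf, zero_mul, add_zero]
  refine ⟨?_, ?_, ?_⟩
  · calc (e + f) * (r + (e - r * a * e) * s * (e - e * a * r)) * (e + f)
        = (e + f) * r * (e + f)
          + ((e + f) * e - (e + f) * r * a * e) * s * (e * (e + f) - e * a * (r * (e + f))) := by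
          noncomm_ring
      _ = r + (e - r * a * e) * s * (e - e * a * r) := by rw [hqr, hrq, hqe, heq]
  · calc (r + (e - r * a * e) * s * (e - e * a * r)) * ((e + f) * a * (e + f))
        = r * (e + f) * a * (e + f)
          + (e - r * a * e) * (s * ((e - e * a * r) * ((e + f) * a * (e + f)))) := by
          noncomm_ring
      _ = r * a * e + f + (e - r * a * e) * e := by
        rw [hrq, hrow, hsl, mul_add, hr.mul_mul_proj hf]
      _ = e + f := by rw [sub_mul, he.eq, mul_assoc _ e e, he.eq]; abel
  · calc (e + f) * a * (e + f) * (r + (e - r * a * e) * s * (e - e * a * r))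
        = (e + f) * a * ((e + f) * r)
          + (e + f) * a * (e + f) * (e - r * a * e) * s * (e - e * a * r) := by
          noncomm_ring
      _ = e * a * r + f + e * (e - e * a * r) := by
        rw [hqr, hcol, hsr, add_mul, add_mul, hr.proj_mul_mul hf]
      _ = e + f := by rw [mul_sub, he.eq, ← mul_assoc, ← mul_assoc, he.eq]; abel

end IsCornerInverse

theorem feshbach_schur_invertibility_transfer_general
    {𝓗 : Type*} [NormedAddCommGroup 𝓗] [InnerProductSpace ℂ 𝓗] [CompleteSpace 𝓗]
    (O P₁ P₂ R S : 𝓗 →L[ℂ] 𝓗)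
    (hP₁ : P₁ * P₁ = P₁) (hP₂ : P₂ * P₂ = P₂)
    (hP₁₂ : P₁ * P₂ = P₂) (hP₂₁ : P₂ * P₁ = P₂)
    (hR : (1 - P₁) * R * (1 - P₁) = R)
    (hRl : R * ((1 - P₁) * O * (1 - P₁)) = 1 - P₁)
    (hRr : ((1 - P₁) * O * (1 - P₁)) * R = 1 - P₁)
    (hSl : S * ((1 - P₂) * (P₁ * O * P₁ - P₁ * O * R * (O * P₁)) * (1 - P₂)) =
      P₁ * (1 - P₂))
    (hSr : ((1 - P₂) * (P₁ * O * P₁ - P₁ * O * R * (O * P₁)) * (1 - P₂)) * S =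
      P₁ * (1 - P₂)) :
    ∃ T : 𝓗 →L[ℂ] 𝓗,
      (1 - P₂) * T * (1 - P₂) = T ∧
      T * ((1 - P₂) * O * (1 - P₂)) = 1 - P₂ ∧
      ((1 - P₂) * O * (1 - P₂)) * T = 1 - P₂ := by
  have hcomm : Commute P₁ (1 - P₂) := (Commute.one_right P₁).sub_right (hP₁₂.trans hP₂₁.symm)
  have he : IsIdempotentElem (P₁ * (1 - P₂)) :=
    IsIdempotentElem.mul_of_commute hcomm hP₁ (IsIdempotentElem.one_sub hP₂)
  have hef : P₁ * (1 - P₂) * (1 - P₁) = 0 := by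
    rw [hcomm.eq, mul_assoc, IsIdempotentElem.mul_one_sub_self hP₁, mul_zero]
  have hfe : (1 - P₁) * (P₁ * (1 - P₂)) = 0 := by
    rw [← mul_assoc, IsIdempotentElem.one_sub_mul_self hP₁, zero_mul]
  have hsum : P₁ * (1 - P₂) + (1 - P₁) = 1 - P₂ := by rw [mul_sub, mul_one, hP₁₂]; abel
  have hschur : (1 - P₂) * (P₁ * O * P₁ - P₁ * O * R * (O * P₁)) * (1 - P₂) =
      P₁ * (1 - P₂) * (O - O * R * O) * (P₁ * (1 - P₂)) :=
    calc _ = (1 - P₂) * P₁ * (O - O * R * O) * (P₁ * (1 - P₂)) := by noncomm_ring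
      _ = _ := by rw [← hcomm.eq]
  have hT := IsCornerInverse.add_of_schur_complement he (IsIdempotentElem.one_sub hP₁) hef hfe
    ⟨hR, hRl, hRr⟩ (hschur ▸ hSl) (hschur ▸ hSr)
  rw [hsum] at hT
  exact ⟨_, hT.corner, hT.left, hT.right⟩

/-- Invertibility transfer through the Feshbach–Schur map.
If `P̄₁ O P̄₁` is invertible on the range of `P̄₁` (with inverse `R`), and the
Feshbach–Schur operator `F = F_{P₁}(O) = P₁ O P₁ - P₁ O R O P₁` is such that
`P̄₂ F P̄₂` is invertible on the range of `P₁ P̄₂` (with inverse `S`), then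
`P̄₂ O P̄₂` is invertible on the range of `P̄₂`. -/
theorem feshbach_schur_invertibility_transfer
    {𝓗 : Type*} [NormedAddCommGroup 𝓗] [InnerProductSpace ℂ 𝓗] [CompleteSpace 𝓗]
    (O P₁ P₂ R S : 𝓗 →L[ℂ] 𝓗)
    (hP₁ : P₁ * P₁ = P₁) (hP₂ : P₂ * P₂ = P₂)
    (hP₁₂ : P₁ * P₂ = P₂) (hP₂₁ : P₂ * P₁ = P₂)
    (hR : (1 - P₁) * R * (1 - P₁) = R)
    (hRl : R * ((1 - P₁) * O * (1 - P₁)) = 1 - P₁)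
    (hRr : ((1 - P₁) * O * (1 - P₁)) * R = 1 - P₁)
    (hS : (P₁ * (1 - P₂)) * S * (P₁ * (1 - P₂)) = S)
    (hSl : S * ((1 - P₂) * (P₁ * O * P₁ - P₁ * O * R * (O * P₁)) * (1 - P₂)) =
      P₁ * (1 - P₂))
    (hSr : ((1 - P₂) * (P₁ * O * P₁ - P₁ * O * R * (O * P₁)) * (1 - P₂)) * S =
      P₁ * (1 - P₂)) :
    ∃ T : 𝓗 →L[ℂ] 𝓗,
      (1 - P₂) * T * (1 - P₂) = T ∧
      T * ((1 - P₂) * O * (1 - P₂)) = 1 - P₂ ∧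
      ((1 - P₂) * O * (1 - P₂)) * T = 1 - P₂ :=
  feshbach_schur_invertibility_transfer_general O P₁ P₂ R S hP₁ hP₂ hP₁₂ hP₂₁ hR hRl hRr hSl hSr
end

section
/- (Isospectrality of the Feshbach–Schur map, invertibility.) Let H be a bounded operator on a complex Hilbert space 𝓗, P a bounded projection with P̄ := 1 − P, and suppose R is a bounded operator with P̄∘R∘P̄ = R and R∘(P̄∘H∘P̄) = P̄ = (P̄∘H∘P̄)∘R. Set F := F_P(H) = PHP − PH∘R∘HP. Then H is boundedly invertible if and only if there exists a bounded operator S with P∘S∘P = S and S∘F = P = F∘S. Moreover, when H is boundedly invertible, S := P∘H⁻¹∘P satisfies P∘S∘P = S and S∘F = P = F∘S. -/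
/-!
With `L := P - R H P` and `U := P - P H R`, the hypotheses on `R` give `R H = R H P + P̄` and
`H R = P H R + P̄`, hence the Schur-complement factorisations `U H = F_P(H) = H L`.
Compressing a two-sided inverse `G` of `H` to `P G P` therefore inverts `F_P(H)` on the range
of `P`, and conversely an inverse `S` of `F_P(H)` there yields the inverse `L S U + R` of `H`.
-/

def feshbachSchurMap {A : Type*} [Ring A] (P H R : A) : A := P * H * P - P * H * R * (H * P)

def feshbachSchurLift {A : Type*} [Ring A] (P H R S : A) : A :=
  (P - R * (H * P)) * S * (P - P * H * R) + R

namespace IsIdempotentElem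

variable {A : Type*} [Ring A] {P R : A}

theorem mul_compl_corner_eq_zero (hP : IsIdempotentElem P) (hR : (1 - P) * R * (1 - P) = R) :
    P * R = 0 := by
  rw [← hR, ← mul_assoc, ← mul_assoc, hP.mul_one_sub_self, zero_mul, zero_mul]

theorem compl_corner_mul_eq_zero (hP : IsIdempotentElem P) (hR : (1 - P) * R * (1 - P) = R) :
    R * P = 0 := by
  rw [← hR, mul_assoc, hP.one_sub_mul_self, mul_zero]

theorem mul_feshbachSchurMap (hP : IsIdempotentElem P) (H : A) :
    P * feshbachSchurMap P H R = feshbachSchurMap P H R := by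
  simp only [feshbachSchurMap, mul_sub, ← mul_assoc, hP.eq]

theorem feshbachSchurMap_mul (hP : IsIdempotentElem P) (H : A) :
    feshbachSchurMap P H R * P = feshbachSchurMap P H R := by
  simp only [feshbachSchurMap, sub_mul, mul_assoc, hP.eq]

end IsIdempotentElem

section FeshbachSchur

variable {A : Type*} [Ring A] {P H R : A}

theorem mul_eq_mul_mul_add_one_sub_of_left_inv (hP : IsIdempotentElem P)
    (hR : (1 - P) * R * (1 - P) = R) (hRl : R * ((1 - P) * H * (1 - P)) = 1 - P) :
    R * H = R * H * P + (1 - P) := by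
  have hRQ : R * (1 - P) = R := by rw [mul_sub, mul_one, hP.compl_corner_mul_eq_zero hR, sub_zero]
  have hRHQ : R * H * (1 - P) = 1 - P := by rwa [← mul_assoc, ← mul_assoc, hRQ] at hRl
  calc R * H = R * H * P + R * H * (1 - P) := by noncomm_ring
    _ = R * H * P + (1 - P) := by rw [hRHQ]

theorem mul_eq_mul_mul_add_one_sub_of_right_inv (hP : IsIdempotentElem P)
    (hR : (1 - P) * R * (1 - P) = R) (hRr : (1 - P) * H * (1 - P) * R = 1 - P) :
    H * R = P * H * R + (1 - P) := by
  have hQR : (1 - P) * R = R := by rw [sub_mul, one_mul, hP.mul_compl_corner_eq_zero hR, sub_zero]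
  have hQHR : (1 - P) * H * R = 1 - P := by rwa [mul_assoc _ (1 - P), hQR] at hRr
  calc H * R = P * H * R + (1 - P) * H * R := by noncomm_ring
    _ = P * H * R + (1 - P) := by rw [hQHR]

theorem feshbachSchurMap_eq_sub_mul (hP : IsIdempotentElem P)
    (hR : (1 - P) * R * (1 - P) = R) (hRl : R * ((1 - P) * H * (1 - P)) = 1 - P) :
    feshbachSchurMap P H R = (P - P * H * R) * H := by
  calc feshbachSchurMap P H R = P * H - P * H * (R * H * P + (1 - P)) := by
        unfold feshbachSchurMap; noncomm_ring
    _ = (P - P * H * R) * H := by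
        rw [← mul_eq_mul_mul_add_one_sub_of_left_inv hP hR hRl]; noncomm_ring

theorem feshbachSchurMap_eq_mul_sub (hP : IsIdempotentElem P)
    (hR : (1 - P) * R * (1 - P) = R) (hRr : (1 - P) * H * (1 - P) * R = 1 - P) :
    feshbachSchurMap P H R = H * (P - R * (H * P)) := by
  calc feshbachSchurMap P H R = H * P - (P * H * R + (1 - P)) * (H * P) := by
        unfold feshbachSchurMap; noncomm_ring
    _ = H * (P - R * (H * P)) := by
        rw [← mul_eq_mul_mul_add_one_sub_of_right_inv hP hR hRr]; noncomm_ring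

theorem compression_mul_feshbachSchurMap {G : A} (hP : IsIdempotentElem P)
    (hR : (1 - P) * R * (1 - P) = R) (hRr : (1 - P) * H * (1 - P) * R = 1 - P)
    (hG : G * H = 1) :
    P * G * P * feshbachSchurMap P H R = P := by
  calc P * G * P * feshbachSchurMap P H R
      = P * G * (H * (P - R * (H * P))) := by
        rw [mul_assoc, hP.mul_feshbachSchurMap, feshbachSchurMap_eq_mul_sub hP hR hRr]
    _ = P * (G * H) * P - P * (G * H) * R * (H * P) := by noncomm_ring
    _ = P := by rw [hG, mul_one, hP.eq, hP.mul_compl_corner_eq_zero hR, zero_mul, sub_zero]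

theorem feshbachSchurMap_mul_compression {G : A} (hP : IsIdempotentElem P)
    (hR : (1 - P) * R * (1 - P) = R) (hRl : R * ((1 - P) * H * (1 - P)) = 1 - P)
    (hG : H * G = 1) :
    feshbachSchurMap P H R * (P * G * P) = P := by
  calc feshbachSchurMap P H R * (P * G * P)
      = feshbachSchurMap P H R * P * (G * P) := by noncomm_ring
    _ = (P - P * H * R) * H * G * P := by
        rw [hP.feshbachSchurMap_mul, feshbachSchurMap_eq_sub_mul hP hR hRl]; noncomm_ring
    _ = P * (H * G) * P - P * H * (R * (H * G) * P) := by noncomm_ring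
    _ = P := by
        rw [hG, mul_one, mul_one, hP.eq, hP.compl_corner_mul_eq_zero hR, mul_zero, sub_zero]

theorem feshbachSchurLift_mul {S : A} (hP : IsIdempotentElem P)
    (hR : (1 - P) * R * (1 - P) = R) (hRl : R * ((1 - P) * H * (1 - P)) = 1 - P)
    (hS : S * feshbachSchurMap P H R = P) :
    feshbachSchurLift P H R S * H = 1 := by
  calc feshbachSchurLift P H R S * H
      = (P - R * (H * P)) * (S * ((P - P * H * R) * H)) + R * H := by
        unfold feshbachSchurLift; noncomm_ring
    _ = (P - R * H * P) * P + (R * H * P + (1 - P)) := by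
        rw [← feshbachSchurMap_eq_sub_mul hP hR hRl, hS,
          ← mul_eq_mul_mul_add_one_sub_of_left_inv hP hR hRl, mul_assoc R H P]
    _ = 1 := by rw [sub_mul, mul_assoc (R * H), hP.eq]; noncomm_ring

theorem mul_feshbachSchurLift {S : A} (hP : IsIdempotentElem P)
    (hR : (1 - P) * R * (1 - P) = R) (hRr : (1 - P) * H * (1 - P) * R = 1 - P)
    (hS : feshbachSchurMap P H R * S = P) :
    H * feshbachSchurLift P H R S = 1 := by
  calc H * feshbachSchurLift P H R S
      = H * (P - R * (H * P)) * S * (P - P * H * R) + H * R := by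
        unfold feshbachSchurLift; noncomm_ring
    _ = P * (P - P * H * R) + (P * H * R + (1 - P)) := by
        rw [← feshbachSchurMap_eq_mul_sub hP hR hRr, hS,
          ← mul_eq_mul_mul_add_one_sub_of_right_inv hP hR hRr]
    _ = 1 := by simp only [mul_sub, ← mul_assoc, hP.eq]; noncomm_ring

end FeshbachSchur

theorem feshbach_schur_isospectral_invertibility_general
    {𝓗 : Type*} [NormedAddCommGroup 𝓗] [InnerProductSpace ℂ 𝓗]
    (H P R : 𝓗 →L[ℂ] 𝓗)
    (hP : P * P = P)
    (hR : (1 - P) * R * (1 - P) = R)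
    (hRl : R * ((1 - P) * H * (1 - P)) = 1 - P)
    (hRr : ((1 - P) * H * (1 - P)) * R = 1 - P) :
    ((∃ Hinv : 𝓗 →L[ℂ] 𝓗, Hinv * H = 1 ∧ H * Hinv = 1) ↔
      (∃ S : 𝓗 →L[ℂ] 𝓗, P * S * P = S ∧
        S * (P * H * P - P * H * R * (H * P)) = P ∧
        (P * H * P - P * H * R * (H * P)) * S = P)) ∧
    (∀ Hinv : 𝓗 →L[ℂ] 𝓗, Hinv * H = 1 → H * Hinv = 1 →
      P * (P * Hinv * P) * P = P * Hinv * P ∧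
      (P * Hinv * P) * (P * H * P - P * H * R * (H * P)) = P ∧
      (P * H * P - P * H * R * (H * P)) * (P * Hinv * P) = P) := by
  have hP : IsIdempotentElem P := hP
  have compression_inverts (G : 𝓗 →L[ℂ] 𝓗) (hGl : G * H = 1) (hGr : H * G = 1) :
      P * (P * G * P) * P = P * G * P ∧
        P * G * P * feshbachSchurMap P H R = P ∧ feshbachSchurMap P H R * (P * G * P) = P :=
    ⟨by simp only [mul_assoc, hP.eq, hP.mul_self_mul],
      compression_mul_feshbachSchurMap hP hR hRr hGl,
      feshbachSchurMap_mul_compression hP hR hRl hGr⟩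
  refine ⟨⟨fun ⟨G, hGl, hGr⟩ => ⟨P * G * P, compression_inverts G hGl hGr⟩, ?_⟩,
    compression_inverts⟩
  rintro ⟨S, -, hSF, hFS⟩
  exact ⟨feshbachSchurLift P H R S, feshbachSchurLift_mul hP hR hRl hSF,
    mul_feshbachSchurLift hP hR hRr hFS⟩

/-- Isospectrality of the Feshbach–Schur map (invertibility).
Let `H` be a bounded operator on a complex Hilbert space, `P` a bounded projection,
`P̄ = 1 - P`, and suppose `R` satisfies `P̄ R P̄ = R` and
`R (P̄ H P̄) = P̄ = (P̄ H P̄) R`.  Set `F = F_P(H) = P H P - P H R H P`.  Then `H` is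
boundedly invertible iff there is a bounded `S` with `P S P = S` and
`S F = P = F S`; moreover, if `Hinv` is a bounded two-sided inverse of `H`, then
`S := P Hinv P` is such an operator. -/
theorem feshbach_schur_isospectral_invertibility
    {𝓗 : Type*} [NormedAddCommGroup 𝓗] [InnerProductSpace ℂ 𝓗] [CompleteSpace 𝓗]
    (H P R : 𝓗 →L[ℂ] 𝓗)
    (hP : P * P = P)
    (hR : (1 - P) * R * (1 - P) = R)
    (hRl : R * ((1 - P) * H * (1 - P)) = 1 - P)
    (hRr : ((1 - P) * H * (1 - P)) * R = 1 - P) :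
    ((∃ Hinv : 𝓗 →L[ℂ] 𝓗, Hinv * H = 1 ∧ H * Hinv = 1) ↔
      (∃ S : 𝓗 →L[ℂ] 𝓗, P * S * P = S ∧
        S * (P * H * P - P * H * R * (H * P)) = P ∧
        (P * H * P - P * H * R * (H * P)) * S = P)) ∧
    (∀ Hinv : 𝓗 →L[ℂ] 𝓗, Hinv * H = 1 → H * Hinv = 1 →
      P * (P * Hinv * P) * P = P * Hinv * P ∧
      (P * Hinv * P) * (P * H * P - P * H * R * (H * P)) = P ∧
      (P * H * P - P * H * R * (H * P)) * (P * Hinv * P) = P) :=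
  feshbach_schur_isospectral_invertibility_general H P R hP hR hRl hRr
end

section
/- (Isospectrality of the Feshbach–Schur map, injectivity.) Let H be a bounded operator on a complex Hilbert space 𝓗, P a bounded projection with P̄ := 1 − P, and suppose R is a bounded operator with P̄∘R∘P̄ = R and R∘(P̄∘H∘P̄) = P̄ = (P̄∘H∘P̄)∘R. Set F := F_P(H) = PHP − PH∘R∘HP. Then there exists ψ ≠ 0 with Hψ = 0 if and only if there exists φ ≠ 0 with Pφ = φ and Fφ = 0. Moreover: if Hψ = 0 with ψ ≠ 0, then φ := Pψ is nonzero and Fφ = 0; conversely, if Pφ = φ ≠ 0 and Fφ = 0, then ψ := φ − R(Hφ) is nonzero and Hψ = 0. -/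
/-! The hypotheses give `P̄ R = R P̄ = R`, and from these the ring identities
`(1 - R H) P = 1 - R H`, `P (1 - R H) = P` and `H (1 - R H) P = F_P(H)`. For `ψ ∈ ker H`,
`ψ = (1 - R H) ψ = (1 - R H) P ψ`, so `P ψ ≠ 0`; for `φ ∈ ran P`, `P (1 - R H) φ = φ`, so
`(1 - R H) φ ≠ 0`; and the third identity carries the kernels into each other. -/

namespace IsIdempotentElem

variable {A : Type*} [Semigroup A] {e r : A}

theorem mul_eq_right_of_mul_mul_eq (he : IsIdempotentElem e) (hr : e * r * e = r) :
    e * r = r := by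
  rw [← hr, ← mul_assoc, ← mul_assoc, he.eq]

theorem mul_eq_left_of_mul_mul_eq (he : IsIdempotentElem e) (hr : e * r * e = r) :
    r * e = r := by
  rw [← hr, mul_assoc, he.eq]

end IsIdempotentElem

namespace FeshbachSchur

variable {A : Type*} [Ring A] {H P R : A}
variable (hP : IsIdempotentElem P) (hR : (1 - P) * R * (1 - P) = R)
include hP hR

theorem mul_one_sub_mul_eq_self : P * (1 - R * H) = P := by
  have hPR : P * R = 0 := by
    rw [← hP.one_sub.mul_eq_right_of_mul_mul_eq hR, ← mul_assoc, hP.mul_one_sub_self, zero_mul]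
  rw [mul_sub, mul_one, ← mul_assoc, hPR, zero_mul, sub_zero]

theorem one_sub_mul_mul_eq_self (hRl : R * ((1 - P) * H * (1 - P)) = 1 - P) :
    (1 - R * H) * P = 1 - R * H := by
  have hRQ := hP.one_sub.mul_eq_left_of_mul_mul_eq hR
  have hRH : R * H = R * H * P + (1 - P) := by
    calc R * H = R * (1 - P) * H := by rw [hRQ]
      _ = R * (1 - P) * H * P + R * ((1 - P) * H * (1 - P)) := by noncomm_ring
      _ = R * H * P + (1 - P) := by rw [hRQ, hRl]
  rw [hRH, show 1 - (R * H * P + (1 - P)) = P - R * H * P by abel, sub_mul, mul_assoc (R * H),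
    hP.eq]

theorem mul_one_sub_mul_mul_eq_feshbachSchurMap (hRr : ((1 - P) * H * (1 - P)) * R = 1 - P) :
    H * (1 - R * H) * P = feshbachSchurMap P H R := by
  have hQHR : (1 - P) * H * R = 1 - P := by
    calc (1 - P) * H * R = (1 - P) * H * ((1 - P) * R) := by
          rw [hP.one_sub.mul_eq_right_of_mul_mul_eq hR]
      _ = 1 - P := by rw [← mul_assoc, hRr]
  calc H * (1 - R * H) * P
      = feshbachSchurMap P H R + ((1 - P) * H * P - (1 - P) * H * R * H * P) := by
        unfold feshbachSchurMap; noncomm_ring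
    _ = feshbachSchurMap P H R := by rw [hQHR]; noncomm_ring

variable {M : Type*} [AddCommGroup M] [Module A M]

theorem smul_ne_zero_and_feshbachSchurMap_smul_eq_zero_of_smul_eq_zero
    (hRl : R * ((1 - P) * H * (1 - P)) = 1 - P) (hRr : ((1 - P) * H * (1 - P)) * R = 1 - P)
    {ψ : M} (hψ : ψ ≠ 0) (hHψ : H • ψ = 0) :
    P • ψ ≠ 0 ∧ feshbachSchurMap P H R • P • ψ = 0 := by
  have hlift : (1 - R * H) • P • ψ = ψ := by
    rw [← mul_smul, one_sub_mul_mul_eq_self hP hR hRl, sub_smul, one_smul, mul_smul, hHψ,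
      smul_zero, sub_zero]
  constructor
  · intro h0
    rw [← hlift, h0, smul_zero] at hψ
    exact hψ rfl
  · rw [← mul_one_sub_mul_mul_eq_feshbachSchurMap hP hR hRr, mul_smul, mul_smul, ← mul_smul P P,
      hP.eq, hlift, hHψ]

theorem sub_smul_ne_zero_and_smul_eq_zero_of_feshbachSchurMap_smul_eq_zero
    (hRr : ((1 - P) * H * (1 - P)) * R = 1 - P)
    {φ : M} (hφ : φ ≠ 0) (hPφ : P • φ = φ) (hFφ : feshbachSchurMap P H R • φ = 0) :
    φ - R • H • φ ≠ 0 ∧ H • (φ - R • H • φ) = 0 := by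
  have hlift : φ - R • H • φ = (1 - R * H) • φ := by rw [sub_smul, one_smul, mul_smul]
  rw [hlift]
  constructor
  · intro h0
    apply hφ
    calc φ = P • φ := hPφ.symm
      _ = P • (1 - R * H) • φ := by rw [← mul_smul, mul_one_sub_mul_eq_self hP hR]
      _ = 0 := by rw [h0, smul_zero]
  · rw [← mul_smul, ← hPφ, ← mul_smul, mul_one_sub_mul_mul_eq_feshbachSchurMap hP hR hRr, hFφ]

theorem exists_smul_eq_zero_iff_exists_feshbachSchurMap_smul_eq_zero
    (hRl : R * ((1 - P) * H * (1 - P)) = 1 - P) (hRr : ((1 - P) * H * (1 - P)) * R = 1 - P) :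
    (∃ ψ : M, ψ ≠ 0 ∧ H • ψ = 0) ↔
      ∃ φ : M, φ ≠ 0 ∧ P • φ = φ ∧ feshbachSchurMap P H R • φ = 0 := by
  constructor
  · rintro ⟨ψ, hψ, hHψ⟩
    obtain ⟨hPψ, hFPψ⟩ :=
      smul_ne_zero_and_feshbachSchurMap_smul_eq_zero_of_smul_eq_zero hP hR hRl hRr hψ hHψ
    exact ⟨P • ψ, hPψ, by rw [← mul_smul, hP.eq], hFPψ⟩
  · rintro ⟨φ, hφ, hPφ, hFφ⟩
    exact ⟨_,
      sub_smul_ne_zero_and_smul_eq_zero_of_feshbachSchurMap_smul_eq_zero hP hR hRr hφ hPφ hFφ⟩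

end FeshbachSchur

theorem feshbach_schur_isospectral_injectivity_general
    {𝓗 : Type*} [NormedAddCommGroup 𝓗] [InnerProductSpace ℂ 𝓗]
    (H P R : 𝓗 →L[ℂ] 𝓗)
    (hP : P * P = P)
    (hR : (1 - P) * R * (1 - P) = R)
    (hRl : R * ((1 - P) * H * (1 - P)) = 1 - P)
    (hRr : ((1 - P) * H * (1 - P)) * R = 1 - P) :
    ((∃ ψ : 𝓗, ψ ≠ 0 ∧ H ψ = 0) ↔
      (∃ φ : 𝓗, φ ≠ 0 ∧ P φ = φ ∧
        (P * H * P - P * H * R * (H * P)) φ = 0)) ∧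
    (∀ ψ : 𝓗, ψ ≠ 0 → H ψ = 0 →
      P ψ ≠ 0 ∧ (P * H * P - P * H * R * (H * P)) (P ψ) = 0) ∧
    (∀ φ : 𝓗, φ ≠ 0 → P φ = φ →
      (P * H * P - P * H * R * (H * P)) φ = 0 →
      φ - R (H φ) ≠ 0 ∧ H (φ - R (H φ)) = 0) := by
  -- `T x` is definitionally `T • x` for the action of `𝓗 →L[ℂ] 𝓗` on `𝓗`.
  refine ⟨FeshbachSchur.exists_smul_eq_zero_iff_exists_feshbachSchurMap_smul_eq_zero hP hR hRl hRr,
    fun _ hψ hHψ => ?_, fun _ hφ hPφ hFφ => ?_⟩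
  · exact FeshbachSchur.smul_ne_zero_and_feshbachSchurMap_smul_eq_zero_of_smul_eq_zero
      hP hR hRl hRr hψ hHψ
  · exact FeshbachSchur.sub_smul_ne_zero_and_smul_eq_zero_of_feshbachSchurMap_smul_eq_zero
      hP hR hRr hφ hPφ hFφ

/-- Isospectrality of the Feshbach–Schur map (injectivity).
Let `H` be a bounded operator on a complex Hilbert space, `P` a bounded projection,
`P̄ = 1 - P`, and suppose `R` satisfies `P̄ R P̄ = R` and `R (P̄ H P̄) = P̄ = (P̄ H P̄) R`.
Set `F = F_P(H) = P H P - P H R H P`.  Then `H` has a nonzero kernel vector iff `F`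
has a nonzero kernel vector in the range of `P`; moreover the kernel vectors are
mapped to each other by `ψ ↦ P ψ` and `φ ↦ φ - R (H φ)`. -/
theorem feshbach_schur_isospectral_injectivity
    {𝓗 : Type*} [NormedAddCommGroup 𝓗] [InnerProductSpace ℂ 𝓗] [CompleteSpace 𝓗]
    (H P R : 𝓗 →L[ℂ] 𝓗)
    (hP : P * P = P)
    (hR : (1 - P) * R * (1 - P) = R)
    (hRl : R * ((1 - P) * H * (1 - P)) = 1 - P)
    (hRr : ((1 - P) * H * (1 - P)) * R = 1 - P) :
    ((∃ ψ : 𝓗, ψ ≠ 0 ∧ H ψ = 0) ↔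
      (∃ φ : 𝓗, φ ≠ 0 ∧ P φ = φ ∧
        (P * H * P - P * H * R * (H * P)) φ = 0)) ∧
    (∀ ψ : 𝓗, ψ ≠ 0 → H ψ = 0 →
      P ψ ≠ 0 ∧ (P * H * P - P * H * R * (H * P)) (P ψ) = 0) ∧
    (∀ φ : 𝓗, φ ≠ 0 → P φ = φ →
      (P * H * P - P * H * R * (H * P)) φ = 0 →
      φ - R (H φ) ≠ 0 ∧ H (φ - R (H φ)) = 0) :=
  feshbach_schur_isospectral_injectivity_general H P R hP hR hRl hRr
end

section
/- (Membership of the renormalization parameters, Theorem on parameters, part 1.) Under the fixed parameters and the sequence definitions below, for every integer ℓ ≥ 0 and every β ∈ [0, α₊], the triple ε^{(ℓ)} = (ε_I^{(ℓ)}, ε_Z^{(ℓ)}, ε_F^{(ℓ)}) belongs to E_β, i.e. it satisfies: (1 − ε_F^{(ℓ)}) − (1/2)e^{1/10} − ε_I^{(ℓ)}·(ρ e^{−α₊})^{−1} > 1/3; ε_I^{(ℓ)}·(ρ e^{−β})^{−1} < 1/(3·2⁴); 𝒢_β(ε^{(ℓ)}) < 1; and 3e^{β}(ε_I^{(ℓ)})²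 / ((1 − 𝒢_β(ε^{(ℓ)}))·e^{−β}ρ) < ((1 − ι)/2)·ρ. -/
/-- The quantity `𝒢_α(ε_I, ε_Z, ε_F)` from the paper. -/
noncomputable def Gfun (ρ α εI εZ εF : ℝ) : ℝ :=
  3 * (min α 1 * εI ^ 2 / (Real.exp (-α) * ρ)) *
    (2 + 3 / (Real.exp (-α) * ρ) * (εZ + εI))

/-- Membership `(ε_I, ε_Z, ε_F) ∈ E_α` (with parameters `ρ`, `α₊`, `ι`). -/
def memE (ρ αp ι α εI εZ εF : ℝ) : Prop :=
  1 / 3 < (1 - εF) - 1 / 2 * Real.exp (1 / 10) - εI * (ρ * Real.exp (-αp))⁻¹ ∧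
  εI * (ρ * Real.exp (-α))⁻¹ < 1 / (3 * 2 ^ 4) ∧
  Gfun ρ α εI εZ εF < 1 ∧
  3 * Real.exp α * εI ^ 2 / ((1 - Gfun ρ α εI εZ εF) * (Real.exp (-α) * ρ)) <
    (1 - ι) / 2 * ρ

/-- `|α|_j := μ (α₁ + ⋯ + α_j)`, with `|α|₀ = 0`. -/
noncomputable def normA (μ : ℝ) (a : ℕ → ℝ) (j : ℕ) : ℝ :=
  μ * ∑ i ∈ Finset.range j, a (i + 1)

/-- The sequence `ε_Z^{(ℓ)}`, with `ε_Z^{(0)} = 1`. -/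
noncomputable def epsZ (μ : ℝ) (a : ℕ → ℝ) (ℓ : ℕ) : ℝ :=
  if ℓ = 0 then 1 else
    (∏ j ∈ Finset.range ℓ,
        (1 - (10 : ℝ) ^ (-12 : ℤ) * Real.exp (-(normA μ a j) / 2))⁻¹) +
      (10 : ℝ) ^ (-7 : ℤ) * ∑ j ∈ Finset.range ℓ,
        Real.exp (-(normA μ a j) / 2) *
          ∏ l ∈ Finset.Icc j (ℓ - 1),
            (1 - (10 : ℝ) ^ (-12 : ℤ) * Real.exp (-(normA μ a l) / 2))⁻¹

/-- The sequence `ε_F^{(ℓ)}`. -/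
noncomputable def epsF (μ : ℝ) (a : ℕ → ℝ) (εF0 : ℝ) (ℓ : ℕ) : ℝ :=
  εF0 + (10 : ℝ) ^ (-7 : ℤ) * ∑ j ∈ Finset.range ℓ, Real.exp (-(normA μ a j) / 2)

/-- The sequence `ε_I^{(ℓ)}`. -/
noncomputable def epsI (μ : ℝ) (a : ℕ → ℝ) (εI0 : ℝ) (ℓ : ℕ) : ℝ :=
  εI0 * Real.exp (-(normA μ a ℓ) / 4)

/-!
Since `μ α_j ≥ 6`, the weights `e^{-|α|_j/2}` are dominated by `2^{-j}`. Hence `ε_F^{(ℓ)}`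
exceeds `ε_F^{(0)}` by at most `2·10⁻⁷`, every product of the factors
`(1 - 10⁻¹² e^{-|α|_l/2})⁻¹` is at most `exp (4·10⁻¹²) < 3`, so `ε_Z^{(ℓ)} ≤ 4`, and
`ε_I^{(ℓ)} ≤ ε_I^{(0)}`.

Everything in `E_β` is then controlled by `t = ε_I e^β / ρ ≤ 10⁻⁷ ρ e^{-α₊} / 2`: one has
`𝒢_β = 3 min(β, 1) t (2 ε_I + 3 t (ε_Z + ε_I))`, and the last condition reads
`3 t² / (1 - 𝒢_β) < 1 / (20 α₊)`, which holds because `α₊ e^{-α₊} ≤ 1`.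
-/

open Real Finset

theorem Real.exp_one_tenth_le : exp (1 / 10) ≤ 10 / 9 :=
  (exp_bound_div_one_sub_of_interval (by norm_num) (by norm_num)).trans_eq (by norm_num)

theorem Real.exp_neg_le_half_pow {x : ℝ} {n : ℕ} (h : n ≤ x) : exp (-x) ≤ (1 / 2) ^ n := by
  calc exp (-x) ≤ exp (-1) ^ n := by
        rw [← exp_nat_mul]; exact exp_le_exp.mpr (by linarith)
    _ ≤ (1 / 2) ^ n := by
        gcongr
        rw [exp_neg, inv_le_comm₀ (exp_pos 1) (by norm_num)]
        linarith [exp_one_gt_two]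

theorem sum_le_two_of_le_half_pow {f : ℕ → ℝ} (h : ∀ n, f n ≤ (1 / 2) ^ n) (s : Finset ℕ) :
    ∑ n ∈ s, f n ≤ 2 :=
  calc ∑ n ∈ s, f n ≤ ∑ n ∈ s, (1 / 2 : ℝ) ^ n := sum_le_sum fun n _ ↦ h n
    _ ≤ ∑' n, (1 / 2 : ℝ) ^ n := summable_geometric_two.sum_le_tsum s fun n _ ↦ by positivity
    _ = 2 := tsum_geometric_two

theorem inv_one_sub_le_exp_two_mul {c : ℝ} (h0 : 0 ≤ c) (h1 : c ≤ 1 / 2) :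
    (1 - c)⁻¹ ≤ exp (2 * c) := by
  calc (1 - c)⁻¹ ≤ 2 * c + 1 := by
        rw [inv_le_iff_one_le_mul₀ (by linarith)]; nlinarith
    _ ≤ exp (2 * c) := add_one_le_exp _

theorem prod_inv_one_sub_le_exp_two_mul_sum {ι : Type*} {s : Finset ι} {c : ι → ℝ}
    (h0 : ∀ i ∈ s, 0 ≤ c i) (h1 : ∀ i ∈ s, c i ≤ 1 / 2) :
    ∏ i ∈ s, (1 - c i)⁻¹ ≤ exp (2 * ∑ i ∈ s, c i) := by
  rw [mul_sum, exp_sum]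
  exact prod_le_prod (fun i hi ↦ inv_nonneg.mpr (by linarith [h1 i hi]))
    fun i hi ↦ inv_one_sub_le_exp_two_mul (h0 i hi) (h1 i hi)

theorem mul_le_normA {μ c : ℝ} {a : ℕ → ℝ} (hμ : 0 ≤ μ) (ha : ∀ i, 1 ≤ i → c ≤ a i) (j : ℕ) :
    j * (μ * c) ≤ normA μ a j := by
  have hsum : j * c ≤ ∑ i ∈ range j, a (i + 1) := by
    simpa using card_nsmul_le_sum (range j) (fun i ↦ a (i + 1)) c fun i _ ↦ ha (i + 1) (by omega)
  unfold normA
  nlinarith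

theorem epsF_le {μ : ℝ} {a : ℕ → ℝ} (hdecay : ∀ j, exp (-normA μ a j / 2) ≤ (1 / 2) ^ j)
    (εF0 : ℝ) (ℓ : ℕ) : epsF μ a εF0 ℓ ≤ εF0 + 2 * (10 : ℝ) ^ (-7 : ℤ) := by
  unfold epsF
  rw [mul_comm 2]
  gcongr
  exact sum_le_two_of_le_half_pow hdecay _

theorem prod_inv_one_sub_exp_normA_le_three {μ : ℝ} {a : ℕ → ℝ}
    (hdecay : ∀ j, exp (-normA μ a j / 2) ≤ (1 / 2) ^ j) (s : Finset ℕ) :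
    ∏ l ∈ s, (1 - (10 : ℝ) ^ (-12 : ℤ) * exp (-normA μ a l / 2))⁻¹ ≤ 3 := by
  have hsmall (l : ℕ) : (10 : ℝ) ^ (-12 : ℤ) * exp (-normA μ a l / 2) ≤ (10 : ℝ) ^ (-12 : ℤ) :=
    mul_le_of_le_one_right (by positivity)
      ((hdecay l).trans (pow_le_one₀ (by norm_num) (by norm_num)))
  calc _ ≤ exp (2 * ∑ l ∈ s, (10 : ℝ) ^ (-12 : ℤ) * exp (-normA μ a l / 2)) :=
        prod_inv_one_sub_le_exp_two_mul_sum (fun l _ ↦ by positivity)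
          fun l _ ↦ (hsmall l).trans (by norm_num)
    _ ≤ exp 1 := by
        gcongr
        rw [← mul_sum]
        linarith [sum_le_two_of_le_half_pow hdecay s]
    _ ≤ 3 := exp_one_lt_three.le

theorem epsZ_le_four {μ : ℝ} {a : ℕ → ℝ} (hdecay : ∀ j, exp (-normA μ a j / 2) ≤ (1 / 2) ^ j)
    (ℓ : ℕ) : epsZ μ a ℓ ≤ 4 := by
  unfold epsZ
  split_ifs
  · norm_num
  have hsum : ∑ j ∈ range ℓ, exp (-normA μ a j / 2) *
      ∏ l ∈ Icc j (ℓ - 1), (1 - (10 : ℝ) ^ (-12 : ℤ) * exp (-normA μ a l / 2))⁻¹ ≤ 6 :=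
    calc _ ≤ ∑ j ∈ range ℓ, exp (-normA μ a j / 2) * 3 :=
          sum_le_sum fun j _ ↦ mul_le_mul_of_nonneg_left
            (prod_inv_one_sub_exp_normA_le_three hdecay _) (exp_pos _).le
      _ ≤ 6 := by rw [← sum_mul]; linarith [sum_le_two_of_le_half_pow hdecay (range ℓ)]
  have hprod := prod_inv_one_sub_exp_normA_le_three hdecay (range ℓ)
  have h7 : (10 : ℝ) ^ (-7 : ℤ) = 1 / 10 ^ 7 := by norm_num
  rw [h7]
  linarith

theorem epsI_le {μ εI0 : ℝ} {a : ℕ → ℝ} {ℓ : ℕ} (hnormA : 0 ≤ normA μ a ℓ) (hεI0 : 0 ≤ εI0) :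
    epsI μ a εI0 ℓ ≤ εI0 :=
  mul_le_of_le_one_right hεI0 (exp_le_one_iff.mpr (by linarith))

theorem Gfun_eq (ρ α εI εZ εF : ℝ) :
    Gfun ρ α εI εZ εF = 3 * min α 1 * (εI * (ρ * exp (-α))⁻¹) *
      (2 * εI + 3 * (εI * (ρ * exp (-α))⁻¹) * (εZ + εI)) := by
  unfold Gfun
  ring

theorem Gfun_le_half {ρ β εI εZ εF : ℝ} (hρ : 0 ≤ ρ) (hβ : 0 ≤ β) (hεI0 : 0 ≤ εI)
    (hεI1 : εI ≤ 1) (hεZ : εZ ≤ 4) (ht : εI * (ρ * exp (-β))⁻¹ ≤ 1 / 100) :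
    Gfun ρ β εI εZ εF ≤ 1 / 2 := by
  rw [Gfun_eq]
  set t := εI * (ρ * exp (-β))⁻¹
  have ht0 : 0 ≤ t := by positivity
  have hmt : 0 ≤ min β 1 * t := mul_nonneg (le_min hβ zero_le_one) ht0
  have hX : 2 * εI + 3 * t * (εZ + εI) ≤ 3 := by
    nlinarith [mul_le_mul_of_nonneg_left (by linarith : εZ + εI ≤ 5) (by positivity : 0 ≤ 3 * t)]
  calc 3 * min β 1 * t * (2 * εI + 3 * t * (εZ + εI)) ≤ 3 * (min β 1 * t) * 3 := by
        rw [mul_assoc 3]; gcongr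
    _ ≤ 1 / 2 := by nlinarith [mul_le_of_le_one_left ht0 (min_le_right β 1)]

theorem three_mul_exp_mul_sq_div_lt {ρ αp ι β εI G : ℝ} (hρ : 0 < ρ) (hαp : 0 < αp)
    (hι : ι = 1 - 1 / (10 * αp)) (hG : G ≤ 1 / 2)
    (ht : αp * (εI * (ρ * exp (-β))⁻¹) ^ 2 < 1 / 120) :
    3 * exp β * εI ^ 2 / ((1 - G) * (exp (-β) * ρ)) < (1 - ι) / 2 * ρ := by
  have hlhs : 3 * exp β * εI ^ 2 / ((1 - G) * (exp (-β) * ρ)) =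
      3 * ρ * (εI * (ρ * exp (-β))⁻¹) ^ 2 / (1 - G) := by
    rw [exp_neg]
    field_simp
  have hrhs : (1 - ι) / 2 * ρ = ρ / (20 * αp) := by
    rw [hι]
    field_simp
    ring
  rw [hlhs, hrhs, div_lt_iff₀ (by linarith), div_mul_eq_mul_div, lt_div_iff₀ (by positivity)]
  nlinarith [mul_lt_mul_of_pos_left ht hρ]

theorem mul_inv_rho_exp_le {ρ αp β εI c : ℝ} (hρ : 0 < ρ) (hβ : β ≤ αp) (hεI : 0 ≤ εI)
    (hεIc : εI ≤ c * exp (-2 * αp) * ρ ^ 2) :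
    εI * (ρ * exp (-β))⁻¹ ≤ c * ρ * exp (-αp) := by
  have hc : 0 ≤ c := nonneg_of_mul_nonneg_left (hεI.trans (hεIc.trans_eq (by ring)))
    (by positivity : 0 < exp (-2 * αp) * ρ ^ 2)
  rw [mul_inv, exp_neg, inv_inv]
  calc εI * (ρ⁻¹ * exp β) ≤ c * exp (-2 * αp) * ρ ^ 2 * (ρ⁻¹ * exp αp) := by gcongr
    _ = c * ρ * exp (-αp) := by
        rw [show -αp = -2 * αp + αp by ring, exp_add]
        field_simp

theorem memE_of_le {ρ αp ι β εI εZ εF : ℝ} (hρ0 : 0 < ρ) (hρ1 : ρ ≤ 1) (hαp : 0 < αp)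
    (hι : ι = 1 - 1 / (10 * αp)) (hβ : β ∈ Set.Icc 0 αp) (hεI0 : 0 ≤ εI)
    (hεI : εI ≤ 1 / 2 * (10 : ℝ) ^ (-7 : ℤ) * exp (-2 * αp) * ρ ^ 2) (hεZ : εZ ≤ 4)
    (hεF : εF ≤ 1 / 10 * (1 - 1 / 2 * exp (1 / 10)) + 2 * (10 : ℝ) ^ (-7 : ℤ)) :
    memE ρ αp ι β εI εZ εF := by
  obtain ⟨hβ0, hβαp⟩ := hβ
  generalize hc_def : (1 / 2 : ℝ) * (10 : ℝ) ^ (-7 : ℤ) = c at hεI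
  have hc : c = 1 / (2 * 10 ^ 7) := by rw [← hc_def]; norm_num
  have hc0 : 0 ≤ c := by rw [hc]; norm_num
  have hρexp : ρ * exp (-αp) ≤ 1 :=
    mul_le_one₀ hρ1 (exp_pos _).le (exp_le_one_iff.mpr (by linarith))
  have hαp_exp : αp * exp (-αp) ≤ 1 := by
    rw [exp_neg, ← div_eq_mul_inv, div_le_one (exp_pos _)]
    linarith [add_one_le_exp αp]
  have hscaled (γ : ℝ) (hγ : γ ≤ αp) : εI * (ρ * exp (-γ))⁻¹ ≤ c * (ρ * exp (-αp)) :=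
    (mul_inv_rho_exp_le hρ0 hγ hεI0 hεI).trans_eq (by ring)
  have htc (γ : ℝ) (hγ : γ ≤ αp) : εI * (ρ * exp (-γ))⁻¹ ≤ c :=
    (hscaled γ hγ).trans (mul_le_of_le_one_right hc0 hρexp)
  have hαpt : αp * (εI * (ρ * exp (-β))⁻¹) ≤ c :=
    calc _ ≤ αp * (c * (ρ * exp (-αp))) := mul_le_mul_of_nonneg_left (hscaled β hβαp) hαp.le
      _ = c * ρ * (αp * exp (-αp)) := by ring
      _ ≤ c := (mul_le_of_le_one_right (by positivity) hαp_exp).trans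
          (mul_le_of_le_one_right hc0 hρ1)
  have hεI1 : εI ≤ 1 := hεI.trans (by
    have : exp (-2 * αp) * ρ ^ 2 ≤ 1 := mul_le_one₀ (exp_le_one_iff.mpr (by linarith))
      (by positivity) (pow_le_one₀ hρ0.le hρ1)
    nlinarith)
  have hG : Gfun ρ β εI εZ εF ≤ 1 / 2 :=
    Gfun_le_half hρ0.le hβ0 hεI0 hεI1 hεZ ((htc β hβαp).trans (by rw [hc]; norm_num))
  refine ⟨?_, (htc β hβαp).trans_lt (by rw [hc]; norm_num), by linarith, ?_⟩
  · nlinarith [htc αp le_rfl, exp_one_tenth_le]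
  · refine three_mul_exp_mul_sq_div_lt hρ0 hαp hι hG ?_
    have ht0 : 0 ≤ εI * (ρ * exp (-β))⁻¹ := by positivity
    nlinarith [mul_le_mul hαpt (htc β hβαp) ht0 (by positivity)]

theorem parameters_mem_E_general
    (μ ρ αp ι αm : ℝ) (a : ℕ → ℝ) (εF0 εI0 : ℝ)
    (hμ : μ ∈ Set.Ioo (0 : ℝ) 1) (hρ : ρ = 1 / 144)
    (hαp : 6 / μ < αp) (hι : ι = 1 - 1 / (10 * αp))
    (hαm : 6 / μ ≤ αm)
    (ha : ∀ j : ℕ, 1 ≤ j → αm ≤ a j ∧ a j ≤ αp)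
    (hεF0' : εF0 ≤ 1 / 10 * (1 - 1 / 2 * Real.exp (1 / 10)))
    (hεI0 : 0 < εI0)
    (hεI0' : εI0 ≤ 1 / 2 * (10 : ℝ) ^ (-7 : ℤ) * Real.exp (-2 * αp) * ρ ^ 2) :
    ∀ ℓ : ℕ, ∀ β ∈ Set.Icc (0 : ℝ) αp,
      memE ρ αp ι β (epsI μ a εI0 ℓ) (epsZ μ a ℓ) (epsF μ a εF0 ℓ) := by
  intro ℓ β hβ
  have hμαm : 6 ≤ μ * αm := by rwa [div_le_iff₀' hμ.1] at hαm
  have hnormA (j : ℕ) : 6 * j ≤ normA μ a j :=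
    (mul_le_normA hμ.1.le (fun i hi ↦ (ha i hi).1) j).trans' (by nlinarith [j.cast_nonneg (α := ℝ)])
  have hdecay (j : ℕ) : exp (-normA μ a j / 2) ≤ (1 / 2) ^ j := by
    rw [neg_div]
    exact exp_neg_le_half_pow (by linarith [hnormA j])
  subst hρ
  exact memE_of_le (by norm_num) (by norm_num) ((div_pos (by norm_num) hμ.1).trans hαp) hι hβ
    (mul_nonneg hεI0.le (exp_pos _).le)
    ((epsI_le (by linarith [hnormA ℓ, ℓ.cast_nonneg (α := ℝ)]) hεI0.le).trans hεI0')
    (epsZ_le_four hdecay ℓ) ((epsF_le hdecay εF0 ℓ).trans (by linarith))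

/-- (Theorem on parameters, part 1.)  For every `ℓ ≥ 0` and every
`β ∈ [0, α₊]`, the triple `ε^{(ℓ)} = (ε_I^{(ℓ)}, ε_Z^{(ℓ)}, ε_F^{(ℓ)})` belongs to
`E_β`. -/
theorem parameters_mem_E
    (μ ρ αp ι αm : ℝ) (a : ℕ → ℝ) (εF0 εI0 : ℝ)
    (hμ : μ ∈ Set.Ioo (0 : ℝ) 1) (hρ : ρ = 1 / 144)
    (hαp : 6 / μ < αp) (hι : ι = 1 - 1 / (10 * αp))
    (hαm : 6 / μ ≤ αm) (hαmp : αm < αp)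
    (ha : ∀ j : ℕ, 1 ≤ j → αm ≤ a j ∧ a j ≤ αp)
    (hεF0 : 0 < εF0) (hεF0' : εF0 ≤ 1 / 10 * (1 - 1 / 2 * Real.exp (1 / 10)))
    (hεI0 : 0 < εI0)
    (hεI0' : εI0 ≤ 1 / 2 * (10 : ℝ) ^ (-7 : ℤ) * Real.exp (-2 * αp) * ρ ^ 2) :
    ∀ ℓ : ℕ, ∀ β ∈ Set.Icc (0 : ℝ) αp,
      memE ρ αp ι β (epsI μ a εI0 ℓ) (epsZ μ a ℓ) (epsF μ a εF0 ℓ) :=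
  parameters_mem_E_general μ ρ αp ι αm a εF0 εI0 hμ hρ hαp hι hαm ha hεF0' hεI0 hεI0'
end

section
/- (Lower bound on the free kernel.) Let ρ > 0, α ≥ 0, ι ∈ (0,1), ε_F ∈ [0,1) with e^{(1−ι)α} < 2(1 − ε_F), and let f : D_{ρ/2} × [0,∞) → ℂ satisfy f(z,0) = z for all z ∈ D_{ρ/2} and |f(z, s+r) − f(z, s) − r| ≤ ε_F·r for all z ∈ D_{ρ/2} and all (r,s) ∈ Δ_ρ. Then for every κ ∈ [0, 1 − e^{(1−ι)α}/(2(1−ε_F))), every z ∈ ℂ with |z| ≤ e^{−ια}ρ/2, and every r ∈ [(1−κ)e^{−α}ρ, ρ]: |f(z,r)| ≥ r(1 − ε_F) − r·e^{(1−ι)α}/(2(1−κ)). -/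
/-! Taking `s = 0` in the increment bound gives `‖f z r - z - r‖ ≤ ε_F r`, hence
`‖f z r‖ ≥ (1 - ε_F) r - ‖z‖`. Since `exp (-ι α) = exp ((1 - ι) α) · exp (-α)`, the lower bound
`r ≥ (1 - κ) exp (-α) ρ` turns `‖z‖ ≤ exp (-ι α) ρ / 2` into `‖z‖ ≤ r exp ((1 - ι) α) / (2 (1 - κ))`. -/

open Real

theorem norm_sub_norm_sub_le_norm_of_norm_sub_sub_le {E : Type*} [SeminormedAddCommGroup E]
    {a b c : E} {δ : ℝ} (h : ‖a - b - c‖ ≤ δ) : ‖c‖ - ‖b‖ - δ ≤ ‖a‖ := by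
  have hc : ‖c‖ - ‖a - b‖ ≤ ‖a - b - c‖ := by
    simpa only [norm_sub_rev c] using norm_sub_norm_le c (a - b)
  linarith [norm_sub_le a b]

theorem exp_neg_mul_mul_le_of_mul_exp_neg_mul_le {α ι ρ r c : ℝ} (hc : 0 < c)
    (hr : c * exp (-α) * ρ ≤ r) : exp (-ι * α) * ρ ≤ r * exp ((1 - ι) * α) / c := by
  have hsplit : exp (-ι * α) = exp ((1 - ι) * α) * exp (-α) := by
    rw [← exp_add]; ring_nf
  rw [le_div_iff₀ hc, hsplit]
  calc exp ((1 - ι) * α) * exp (-α) * ρ * c = exp ((1 - ι) * α) * (c * exp (-α) * ρ) := by ring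
    _ ≤ exp ((1 - ι) * α) * r := by gcongr
    _ = r * exp ((1 - ι) * α) := mul_comm _ _

theorem free_kernel_lower_bound_general
    (ρ α ι εF : ℝ) (f : ℂ → ℝ → ℂ)
    (hρ : 0 < ρ) (hα : 0 ≤ α) (hι : ι ∈ Set.Ioo (0 : ℝ) 1)
    (hexp : Real.exp ((1 - ι) * α) < 2 * (1 - εF))
    (hf0 : ∀ z : ℂ, ‖z‖ ≤ ρ / 2 → f z 0 = z)
    (hfF : ∀ z : ℂ, ‖z‖ ≤ ρ / 2 → ∀ r s : ℝ, 0 < r → 0 ≤ s → r + s ≤ ρ →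
      ‖f z (s + r) - f z s - (r : ℂ)‖ ≤ εF * r) :
    ∀ κ : ℝ, 0 ≤ κ → κ < 1 - Real.exp ((1 - ι) * α) / (2 * (1 - εF)) →
      ∀ z : ℂ, ‖z‖ ≤ Real.exp (-ι * α) * ρ / 2 →
        ∀ r : ℝ, (1 - κ) * Real.exp (-α) * ρ ≤ r → r ≤ ρ →
          r * (1 - εF) - r * Real.exp ((1 - ι) * α) / (2 * (1 - κ)) ≤ ‖f z r‖ := by
  intro κ _ hκ z hz r hr hrρ
  have hκ1 : 0 < 1 - κ := by
    have : 0 < exp ((1 - ι) * α) / (2 * (1 - εF)) := div_pos (exp_pos _) ((exp_pos _).trans hexp)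
    linarith
  have hr0 : 0 < r := lt_of_lt_of_le (by positivity) hr
  have hzρ : ‖z‖ ≤ ρ / 2 := by
    have hexp_le : exp (-ι * α) ≤ 1 :=
      exp_le_one_iff.mpr (by linarith [mul_nonneg hι.1.le hα, neg_mul ι α])
    calc ‖z‖ ≤ exp (-ι * α) * ρ / 2 := hz
      _ ≤ ρ / 2 := by gcongr; exact mul_le_of_le_one_left hρ.le hexp_le
  have hinc := hfF z hzρ r 0 hr0 le_rfl (by linarith)
  rw [zero_add, hf0 z hzρ] at hinc
  have hlow := norm_sub_norm_sub_le_norm_of_norm_sub_sub_le hinc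
  rw [Complex.norm_real, norm_of_nonneg hr0.le] at hlow
  have hzr : ‖z‖ ≤ r * exp ((1 - ι) * α) / (2 * (1 - κ)) := by
    calc ‖z‖ ≤ exp (-ι * α) * ρ / 2 := hz
      _ ≤ r * exp ((1 - ι) * α) / (1 - κ) / 2 := by
        gcongr; exact exp_neg_mul_mul_le_of_mul_exp_neg_mul_le hκ1 hr
      _ = r * exp ((1 - ι) * α) / (2 * (1 - κ)) := by rw [div_div, mul_comm (1 - κ)]
  linarith

/-- (Lower bound on the free kernel.)  Let `ρ > 0`, `α ≥ 0`,
`ι ∈ (0,1)`, `ε_F ∈ [0,1)` with `e^{(1-ι)α} < 2(1-ε_F)`, and let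
`f : D_{ρ/2} × [0,∞) → ℂ` satisfy `f(z,0) = z` and
`|f(z, s+r) - f(z,s) - r| ≤ ε_F r` on `D_{ρ/2} × Δ_ρ`.  Then for every
`κ ∈ [0, 1 - e^{(1-ι)α}/(2(1-ε_F)))`, every `z` with `|z| ≤ e^{-ια} ρ/2`, and
every `r ∈ [(1-κ) e^{-α} ρ, ρ]`:
`|f(z,r)| ≥ r(1-ε_F) - r e^{(1-ι)α}/(2(1-κ))`. -/
theorem free_kernel_lower_bound
    (ρ α ι εF : ℝ) (f : ℂ → ℝ → ℂ)
    (hρ : 0 < ρ) (hα : 0 ≤ α) (hι : ι ∈ Set.Ioo (0 : ℝ) 1)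
    (hεF : εF ∈ Set.Ico (0 : ℝ) 1)
    (hexp : Real.exp ((1 - ι) * α) < 2 * (1 - εF))
    (hf0 : ∀ z : ℂ, ‖z‖ ≤ ρ / 2 → f z 0 = z)
    (hfF : ∀ z : ℂ, ‖z‖ ≤ ρ / 2 → ∀ r s : ℝ, 0 < r → 0 ≤ s → r + s ≤ ρ →
      ‖f z (s + r) - f z s - (r : ℂ)‖ ≤ εF * r) :
    ∀ κ : ℝ, 0 ≤ κ → κ < 1 - Real.exp ((1 - ι) * α) / (2 * (1 - εF)) →
      ∀ z : ℂ, ‖z‖ ≤ Real.exp (-ι * α) * ρ / 2 →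
        ∀ r : ℝ, (1 - κ) * Real.exp (-α) * ρ ≤ r → r ≤ ρ →
          r * (1 - εF) - r * Real.exp ((1 - ι) * α) / (2 * (1 - κ)) ≤ ‖f z r‖ :=
  free_kernel_lower_bound_general ρ α ι εF f hρ hα hι hexp hf0 hfF
end

section
/- (Resolvent bound for the free kernel.) Let ρ ∈ (0,1], α ≥ 0, ι ∈ (0,1), ε_F ∈ [0,1) with e^{(1−ι)α} < 2(1 − ε_F), and let f : D_{ρ/2} × [0,∞) → ℂ satisfy f(z,0) = z for all z ∈ D_{ρ/2} and |f(z, s+r) − f(z, s) − r| ≤ ε_F·r for all z ∈ D_{ρ/2} and all (r,s) ∈ Δ_ρ. Then for every κ ∈ [0, 1 − e^{(1−ι)α}/(2(1−ε_F))), every z ∈ ℂ with |z| ≤ e^{−ια}ρ/2, and every r ∈ [e^{−α}ρ, ρ], one has f(z,r) ≠ 0 and (r + κ e^{−α}ρ)/|f(z,r)| ≤ ((1−κ)ρ e^{−α})^{−1} / ((1 − ε_F) − e^{(1−ι)α}/(2(1−κ))), the denominator being positive. -/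
/-!
Write `a = e^{-α}ρ`, `E = e^{(1-ι)α}` and `D = (1-ε_F) - E/(2(1-κ))`. Taking `s = 0` in the
increment bound gives `f(z,r) = z + r + O(ε_F r)`, and `|z| ≤ aE/2`, so
`|f(z,r)| ≥ (1-ε_F) r - aE/2`. Because `a ≤ 1` and `a ≤ r`, this lower bound dominates
`(1-κ) a D (r + κa)`, which is positive and yields both claims.
-/

theorem le_norm_of_norm_sub_sub_ofReal_le {w z : ℂ} {r ε : ℝ} (hr : 0 ≤ r)
    (h : ‖w - z - r‖ ≤ ε * r) : (1 - ε) * r - ‖z‖ ≤ ‖w‖ := by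
  have hr' : ‖(r : ℂ)‖ = r := by rw [Complex.norm_real, Real.norm_of_nonneg hr]
  have htri := norm_sub_le (w - z) (w - z - r)
  rw [sub_sub_cancel, hr'] at htri
  linarith [norm_sub_le w z]

theorem lt_one_and_sub_div_pos {κ ε E : ℝ} (hE : 0 ≤ E) (hε : ε < 1)
    (hκ : κ < 1 - E / (2 * (1 - ε))) : κ < 1 ∧ 0 < (1 - ε) - E / (2 * (1 - κ)) := by
  have hε' : 0 < 2 * (1 - ε) := by linarith
  have hκ1 : κ < 1 := by linarith [div_nonneg hE hε'.le]
  have hEκ : E < (1 - κ) * (2 * (1 - ε)) := by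
    rwa [lt_sub_comm, div_lt_iff₀ hε'] at hκ
  refine ⟨hκ1, sub_pos.2 ?_⟩
  rw [div_lt_iff₀ (by linarith)]
  linarith

theorem mul_resolvent_denom_le {a r κ ε E : ℝ} (ha : 0 < a) (ha1 : a ≤ 1) (har : a ≤ r)
    (hκ0 : 0 ≤ κ) (hκ1 : κ < 1) (hE : 0 ≤ E) (hD : 0 ≤ (1 - ε) - E / (2 * (1 - κ))) :
    (1 - κ) * a * ((1 - ε) - E / (2 * (1 - κ))) * (r + κ * a) ≤ (1 - ε) * r - a * E / 2 := by
  set D := (1 - ε) - E / (2 * (1 - κ)) with hDdef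
  have hr : 0 ≤ r := ha.le.trans har
  have har' : a * r ≤ r := mul_le_of_le_one_left hr ha1
  have haa : a * a ≤ r := (mul_le_mul_of_nonneg_left har ha.le).trans har'
  have hshift : (1 - κ) * a * (r + κ * a) ≤ r := by
    nlinarith [mul_le_mul_of_nonneg_left haa hκ0, mul_nonneg (mul_nonneg hκ0 hκ0) hr]
  have hhalf : a * E / 2 ≤ r * E / (2 * (1 - κ)) := by
    rw [div_le_div_iff₀ two_pos (by linarith)]
    nlinarith [mul_nonneg hE hκ0, mul_nonneg (mul_nonneg hE hκ0) ha.le]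
  calc (1 - κ) * a * D * (r + κ * a) = (1 - κ) * a * (r + κ * a) * D := by ring
    _ ≤ r * D := mul_le_mul_of_nonneg_right hshift hD
    _ = (1 - ε) * r - r * E / (2 * (1 - κ)) := by rw [hDdef]; ring
    _ ≤ (1 - ε) * r - a * E / 2 := by linarith

theorem ne_zero_and_div_norm_le_of_near_translation {w z : ℂ} {a r κ ε E : ℝ} (ha : 0 < a)
    (ha1 : a ≤ 1) (har : a ≤ r) (hκ0 : 0 ≤ κ) (hκ1 : κ < 1) (hE : 0 ≤ E)
    (hD : 0 < (1 - ε) - E / (2 * (1 - κ))) (hz : ‖z‖ ≤ a * E / 2)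
    (hw : ‖w - z - r‖ ≤ ε * r) :
    w ≠ 0 ∧ (r + κ * a) / ‖w‖ ≤ ((1 - κ) * a)⁻¹ / ((1 - ε) - E / (2 * (1 - κ))) := by
  set D := (1 - ε) - E / (2 * (1 - κ))
  have hr : 0 < r := ha.trans_le har
  have hrκa : 0 < r + κ * a := by positivity
  have hlower : 0 < (1 - κ) * a * D * (r + κ * a) := by
    have : 0 < 1 - κ := sub_pos.2 hκ1
    positivity
  have hbound : (1 - κ) * a * D * (r + κ * a) ≤ ‖w‖ :=
    (mul_resolvent_denom_le ha ha1 har hκ0 hκ1 hE hD.le).trans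
      (by linarith [le_norm_of_norm_sub_sub_ofReal_le hr.le hw])
  refine ⟨norm_pos_iff.1 (hlower.trans_le hbound), ?_⟩
  calc (r + κ * a) / ‖w‖ ≤ (r + κ * a) / ((1 - κ) * a * D * (r + κ * a)) :=
        div_le_div_of_nonneg_left hrκa.le hlower hbound
    _ = ((1 - κ) * a)⁻¹ / D := by field_simp

theorem free_kernel_resolvent_bound_general
    (ρ α ι εF : ℝ) (f : ℂ → ℝ → ℂ)
    (hρ : 0 < ρ) (hρ1 : ρ ≤ 1) (hα : 0 ≤ α) (hι : ι ∈ Set.Ioo (0 : ℝ) 1)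
    (hεF : εF ∈ Set.Ico (0 : ℝ) 1)
    (hf0 : ∀ z : ℂ, ‖z‖ ≤ ρ / 2 → f z 0 = z)
    (hfF : ∀ z : ℂ, ‖z‖ ≤ ρ / 2 → ∀ r s : ℝ, 0 < r → 0 ≤ s → r + s ≤ ρ →
      ‖f z (s + r) - f z s - (r : ℂ)‖ ≤ εF * r) :
    ∀ κ : ℝ, 0 ≤ κ → κ < 1 - Real.exp ((1 - ι) * α) / (2 * (1 - εF)) →
      ∀ z : ℂ, ‖z‖ ≤ Real.exp (-ι * α) * ρ / 2 →
        ∀ r : ℝ, Real.exp (-α) * ρ ≤ r → r ≤ ρ →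
          0 < (1 - εF) - Real.exp ((1 - ι) * α) / (2 * (1 - κ)) ∧
          f z r ≠ 0 ∧
          (r + κ * Real.exp (-α) * ρ) / ‖f z r‖ ≤
            ((1 - κ) * ρ * Real.exp (-α))⁻¹ /
              ((1 - εF) - Real.exp ((1 - ι) * α) / (2 * (1 - κ))) := by
  intro κ hκ0 hκ z hz r har hrρ
  set E := Real.exp ((1 - ι) * α)
  set a := Real.exp (-α) * ρ
  obtain ⟨hκ1, hD⟩ := lt_one_and_sub_div_pos (Real.exp_nonneg _) hεF.2 hκ
  have ha : 0 < a := by positivity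
  have ha1 : a ≤ 1 := mul_le_one₀ (Real.exp_le_one_iff.2 (by linarith)) hρ.le hρ1
  have hzE : ‖z‖ ≤ a * E / 2 := by
    rwa [show a * E = Real.exp (-ι * α) * ρ by rw [mul_right_comm, ← Real.exp_add]; ring_nf]
  have hzρ : ‖z‖ ≤ ρ / 2 := hz.trans <| by
    gcongr
    exact mul_le_of_le_one_left hρ.le (Real.exp_le_one_iff.2 (by nlinarith [hι.1]))
  have hw : ‖f z r - z - r‖ ≤ εF * r := by
    simpa [hf0 z hzρ] using hfF z hzρ r 0 (ha.trans_le har) le_rfl (by linarith)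
  obtain ⟨hne, hdiv⟩ :=
    ne_zero_and_div_norm_le_of_near_translation ha ha1 har hκ0 hκ1 (Real.exp_nonneg _) hD hzE hw
  refine ⟨hD, hne, ?_⟩
  rwa [mul_assoc κ, mul_assoc (1 - κ), mul_comm ρ]

/-- (Resolvent bound for the free kernel.)  Let `ρ ∈ (0,1]`,
`α ≥ 0`, `ι ∈ (0,1)`, `ε_F ∈ [0,1)` with `e^{(1-ι)α} < 2(1-ε_F)`, and let
`f : D_{ρ/2} × [0,∞) → ℂ` satisfy `f(z,0) = z` and
`|f(z, s+r) - f(z,s) - r| ≤ ε_F r` on `D_{ρ/2} × Δ_ρ`.  Then for every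
`κ ∈ [0, 1 - e^{(1-ι)α}/(2(1-ε_F)))`, every `z` with `|z| ≤ e^{-ια} ρ/2`, and every
`r ∈ [e^{-α} ρ, ρ]`, one has `f(z,r) ≠ 0` and
`(r + κ e^{-α} ρ)/|f(z,r)| ≤ ((1-κ) ρ e^{-α})⁻¹ / ((1-ε_F) - e^{(1-ι)α}/(2(1-κ)))`,
the denominator being positive. -/
theorem free_kernel_resolvent_bound
    (ρ α ι εF : ℝ) (f : ℂ → ℝ → ℂ)
    (hρ : 0 < ρ) (hρ1 : ρ ≤ 1) (hα : 0 ≤ α) (hι : ι ∈ Set.Ioo (0 : ℝ) 1)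
    (hεF : εF ∈ Set.Ico (0 : ℝ) 1)
    (hexp : Real.exp ((1 - ι) * α) < 2 * (1 - εF))
    (hf0 : ∀ z : ℂ, ‖z‖ ≤ ρ / 2 → f z 0 = z)
    (hfF : ∀ z : ℂ, ‖z‖ ≤ ρ / 2 → ∀ r s : ℝ, 0 < r → 0 ≤ s → r + s ≤ ρ →
      ‖f z (s + r) - f z s - (r : ℂ)‖ ≤ εF * r) :
    ∀ κ : ℝ, 0 ≤ κ → κ < 1 - Real.exp ((1 - ι) * α) / (2 * (1 - εF)) →
      ∀ z : ℂ, ‖z‖ ≤ Real.exp (-ι * α) * ρ / 2 →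
        ∀ r : ℝ, Real.exp (-α) * ρ ≤ r → r ≤ ρ →
          0 < (1 - εF) - Real.exp ((1 - ι) * α) / (2 * (1 - κ)) ∧
          f z r ≠ 0 ∧
          (r + κ * Real.exp (-α) * ρ) / ‖f z r‖ ≤
            ((1 - κ) * ρ * Real.exp (-α))⁻¹ /
              ((1 - εF) - Real.exp ((1 - ι) * α) / (2 * (1 - κ))) :=
  free_kernel_resolvent_bound_general ρ α ι εF f hρ hρ1 hα hι hεF hf0 hfF
end

section
/- (Momentum-shell integral estimate.) Let μ ∈ (0,1), ρ > 0, α ≥ 0, let m ≥ 1 be an integer, and let s ∈ [0, ρ]. Let A := {(k¹,…,kᵐ) ∈ (ℝ³)ᵐ : e^{−α}ρ ≤ s + Σ_{i=1}^m |kⁱ| ≤ ρ}, where |·| is the Euclidean norm on ℝ³. Then ∫_A ∏_{i=1}^m |kⁱ|^{μ−2} dk¹⋯dkᵐ ≤ (4πρ^{1+μ})^{m−1} · 4π(1 − e^{−α})ρ^{1+μ}, and hence this integral is at most (4πρ^{1+μ})^m · α. -/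
/-!
Split off the first momentum by Fubini. With the other momenta `y` fixed and `T = s + ∑ |yʲ|`,
the first one ranges over the shell `e^{-α}ρ - T ≤ |x| ≤ ρ - T`, whose width is `(1 - e^{-α})ρ`,
while each `yʲ` lies in the ball of radius `ρ`. In polar coordinates `|x|^{μ-2} dx = 4π r^μ dr`
with `r^μ ≤ ρ^μ`, so the shell contributes at most `4π(1 - e^{-α})ρ^{1+μ}` and each ball at most
`4πρ^{1+μ}`. Finally `1 - e^{-α} ≤ α`.
-/

open MeasureTheory Measure Set Metric Module
open scoped ENNReal

section RadialIntegration

variable {E : Type*} [NormedAddCommGroup E] [NormedSpace ℝ E] [Nontrivial E] [MeasurableSpace E]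
  [BorelSpace E] [FiniteDimensional ℝ E] (μ : Measure E) [μ.IsAddHaarMeasure]

theorem lintegral_fun_norm_addHaar {f : ℝ → ℝ≥0∞} (hf : Measurable f) :
    ∫⁻ x, f ‖x‖ ∂μ =
      finrank ℝ E * μ (ball 0 1) * ∫⁻ r in Ioi 0, ENNReal.ofReal (r ^ (finrank ℝ E - 1)) * f r := by
  have hf₂ : Measurable fun p : sphere (0 : E) 1 × Ioi (0 : ℝ) => f p.2 :=
    hf.comp (measurable_subtype_coe.comp measurable_snd)
  calc ∫⁻ x, f ‖x‖ ∂μ = ∫⁻ x : ({0}ᶜ : Set E), f ‖x.1‖ ∂(μ.comap (↑)) := by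
        rw [lintegral_subtype_comap (measurableSet_singleton _).compl (fun x => f ‖x‖),
          restrict_compl_singleton]
    _ = ∫⁻ p, f p.2 ∂μ.toSphere.prod (volumeIoiPow (finrank ℝ E - 1)) := by
        rw [← μ.measurePreserving_homeomorphUnitSphereProd.lintegral_comp hf₂]
        simp
    _ = μ.toSphere univ * ∫⁻ r, f r ∂volumeIoiPow (finrank ℝ E - 1) := by
        rw [lintegral_prod _ hf₂.aemeasurable]
        simp [lintegral_const, mul_comm]
    _ = _ := by
        rw [toSphere_apply_univ, volumeIoiPow]
        exact congrArg _ <| (lintegral_withDensity_eq_lintegral_mul _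
            (measurable_subtype_coe.pow_const _).ennreal_ofReal
            (hf.comp measurable_subtype_coe)).trans
          (lintegral_subtype_comap measurableSet_Ioi
            fun r => ENNReal.ofReal (r ^ (finrank ℝ E - 1)) * f r)

theorem setLIntegral_norm_rpow_le {d : ℕ} (hd : finrank ℝ E = d + 1) {t ρ a b : ℝ}
    (ht : 0 ≤ t) (hρ : 0 ≤ ρ) (hb : b ≤ ρ) :
    ∫⁻ x in norm ⁻¹' Icc a b, ENNReal.ofReal (‖x‖ ^ (t - d)) ∂μ ≤
      (d + 1) * μ (ball 0 1) * ENNReal.ofReal (ρ ^ t * (b - a)) := by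
  have hind : Measurable ((Icc a b).indicator fun r : ℝ => ENNReal.ofReal (r ^ (t - d))) :=
    (measurable_id.pow_const _).ennreal_ofReal.indicator measurableSet_Icc
  have hradial : ∀ r ∈ Ioi (0 : ℝ), ENNReal.ofReal (r ^ d) *
      (Icc a b).indicator (fun r => ENNReal.ofReal (r ^ (t - d))) r ≤
      (Icc a b).indicator (fun _ => ENNReal.ofReal (ρ ^ t)) r := by
    intro r (hr : 0 < r)
    by_cases hab : r ∈ Icc a b
    · rw [indicator_of_mem hab, indicator_of_mem hab, ← ENNReal.ofReal_mul (by positivity),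
        ← Real.rpow_natCast, ← Real.rpow_add hr, add_sub_cancel]
      exact ENNReal.ofReal_le_ofReal (Real.rpow_le_rpow hr.le (hab.2.trans hb) ht)
    · simp [hab]
  calc ∫⁻ x in norm ⁻¹' Icc a b, ENNReal.ofReal (‖x‖ ^ (t - d)) ∂μ
      = ∫⁻ x, (Icc a b).indicator (fun r => ENNReal.ofReal (r ^ (t - d))) ‖x‖ ∂μ :=
        (lintegral_indicator (measurableSet_Icc.preimage measurable_norm) _).symm
    _ = (d + 1) * μ (ball 0 1) * ∫⁻ r in Ioi 0, ENNReal.ofReal (r ^ d) *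
          (Icc a b).indicator (fun r => ENNReal.ofReal (r ^ (t - d))) r := by
        rw [lintegral_fun_norm_addHaar μ hind, hd, Nat.add_sub_cancel]
        push_cast
        rfl
    _ ≤ (d + 1) * μ (ball 0 1) * ∫⁻ r, (Icc a b).indicator (fun _ => ENNReal.ofReal (ρ ^ t)) r :=
        mul_le_mul_right
          ((setLIntegral_mono (measurable_const.indicator measurableSet_Icc) hradial).trans
            (setLIntegral_le_lintegral _ _)) _
    _ = (d + 1) * μ (ball 0 1) * ENNReal.ofReal (ρ ^ t * (b - a)) := by
        rw [lintegral_indicator_const measurableSet_Icc, Real.volume_Icc,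
          ← ENNReal.ofReal_mul (Real.rpow_nonneg hρ t)]

end RadialIntegration

section PiFinSucc

variable {X : Type*} [MeasurableSpace X] (μ : Measure X) [SigmaFinite μ]

theorem lintegral_pi_fin_succ_cons {n : ℕ} {F : (Fin (n + 1) → X) → ℝ≥0∞} (hF : Measurable F) :
    ∫⁻ k, F k ∂Measure.pi (fun _ => μ) =
      ∫⁻ y, ∫⁻ x, F (Fin.cons x y) ∂μ ∂Measure.pi (fun _ => μ) := by
  have he := (measurePreserving_piFinSuccAbove (fun _ : Fin (n + 1) => μ) 0).symm
  have hcons : ⇑(MeasurableEquiv.piFinSuccAbove (fun _ : Fin (n + 1) => X) 0).symm =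
      fun p => Fin.cons p.1 p.2 := by
    ext p : 1
    simp only [MeasurableEquiv.piFinSuccAbove_symm_apply, Fin.insertNthEquiv_zero]
    rfl
  rw [← he.lintegral_comp hF, hcons]
  exact lintegral_prod_symm _ (hF.comp (hcons ▸ he.measurable)).aemeasurable

theorem lintegral_pi_prod_eq_pow {f : X → ℝ≥0∞} (hf : Measurable f) (n : ℕ) :
    ∫⁻ y : Fin n → X, ∏ j, f (y j) ∂Measure.pi (fun _ => μ) = (∫⁻ x, f x ∂μ) ^ n := by
  induction n with
  | zero => simp
  | succ n ih =>
    have hprod : ∀ m, Measurable fun y : Fin m → X => ∏ j, f (y j) := fun m => by fun_prop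
    rw [lintegral_pi_fin_succ_cons μ (hprod (n + 1))]
    simp_rw [Fin.prod_univ_succ, Fin.cons_zero, Fin.cons_succ,
      lintegral_mul_const _ hf]
    rw [lintegral_const_mul _ (hprod n), ih, pow_succ']

end PiFinSucc

section SumNormShell

variable {X : Type*} [NormedAddCommGroup X]

theorem indicator_prod_cons_le {g : X → ℝ≥0∞} {n : ℕ} {s c ρ : ℝ} (x : X) (y : Fin n → X) :
    {k : Fin (n + 1) → X | c ≤ s + ∑ i, ‖k i‖ ∧ s + ∑ i, ‖k i‖ ≤ ρ}.indicator
        (fun k => ∏ i, g (k i)) (Fin.cons x y) ≤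
      (norm ⁻¹' Icc (c - (s + ∑ j, ‖y j‖)) (ρ - (s + ∑ j, ‖y j‖))).indicator g x *
        ∏ j, (norm ⁻¹' Icc 0 (ρ - s)).indicator g (y j) := by
  by_cases hk : (Fin.cons x y : Fin (n + 1) → X) ∈
      {k : Fin (n + 1) → X | c ≤ s + ∑ i, ‖k i‖ ∧ s + ∑ i, ‖k i‖ ≤ ρ}
  · rw [indicator_of_mem hk]
    obtain ⟨hc, hρ⟩ := hk
    simp only [Fin.sum_univ_succ, Fin.cons_zero, Fin.cons_succ] at hc hρ
    have hy : ∀ j, y j ∈ norm ⁻¹' Icc 0 (ρ - s) := fun j =>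
      ⟨norm_nonneg _, by
        linarith [norm_nonneg x, Finset.single_le_sum (fun j _ => norm_nonneg (y j))
          (Finset.mem_univ j)]⟩
    rw [indicator_of_mem (show x ∈ norm ⁻¹' Icc _ _ from ⟨by linarith, by linarith⟩),
      Finset.prod_congr rfl fun j _ => indicator_of_mem (hy j) g]
    simp [Fin.prod_univ_succ]
  · simp [indicator_of_notMem hk]

variable [MeasurableSpace X] [OpensMeasurableSpace X] (μ : Measure X) [SigmaFinite μ]

theorem setLIntegral_prod_le_of_sum_norm_mem_Icc {g : X → ℝ≥0∞} (hg : Measurable g) {n : ℕ}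
    {s c ρ : ℝ} {C : ℝ≥0∞}
    (hC : ∀ T, s ≤ T → ∫⁻ x in norm ⁻¹' Icc (c - T) (ρ - T), g x ∂μ ≤ C) :
    ∫⁻ k in {k : Fin (n + 1) → X | c ≤ s + ∑ i, ‖k i‖ ∧ s + ∑ i, ‖k i‖ ≤ ρ}, ∏ i, g (k i)
        ∂Measure.pi (fun _ => μ) ≤
      C * (∫⁻ x in norm ⁻¹' Icc 0 (ρ - s), g x ∂μ) ^ n := by
  have hA : MeasurableSet {k : Fin (n + 1) → X | c ≤ s + ∑ i, ‖k i‖ ∧ s + ∑ i, ‖k i‖ ≤ ρ} :=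
    measurableSet_Icc.preimage (measurable_const.add
      (Finset.measurable_sum _ fun i _ => (measurable_pi_apply i).norm))
  have hball : Measurable ((norm ⁻¹' Icc 0 (ρ - s)).indicator g) :=
    hg.indicator (measurableSet_Icc.preimage measurable_norm)
  have hprod : Measurable fun k : Fin (n + 1) → X => ∏ i, g (k i) := by fun_prop
  rw [← lintegral_indicator hA, lintegral_pi_fin_succ_cons μ (hprod.indicator hA)]
  calc _ ≤ ∫⁻ y, C * ∏ j, (norm ⁻¹' Icc 0 (ρ - s)).indicator g (y j) ∂Measure.pi (fun _ => μ) := by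
        refine lintegral_mono fun y => ?_
        have hT : s ≤ s + ∑ j, ‖y j‖ := le_add_of_nonneg_right (by positivity)
        refine (lintegral_mono fun x => indicator_prod_cons_le x y).trans ?_
        rw [lintegral_mul_const _ (hg.indicator (measurableSet_Icc.preimage measurable_norm)),
          lintegral_indicator (measurableSet_Icc.preimage measurable_norm)]
        exact mul_le_mul_left (hC _ hT) _
    _ = C * (∫⁻ x in norm ⁻¹' Icc 0 (ρ - s), g x ∂μ) ^ n := by
        rw [lintegral_const_mul _ (by fun_prop), lintegral_pi_prod_eq_pow μ hball,
          lintegral_indicator (measurableSet_Icc.preimage measurable_norm)]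

end SumNormShell

open Real

theorem setLIntegral_norm_rpow_sub_two_le {t ρ a b : ℝ} (ht : 0 ≤ t) (hρ : 0 ≤ ρ) (hb : b ≤ ρ) :
    ∫⁻ x : EuclideanSpace ℝ (Fin 3) in norm ⁻¹' Icc a b, ENNReal.ofReal (‖x‖ ^ (t - 2)) ≤
      ENNReal.ofReal (4 * π * ρ ^ t * (b - a)) := by
  have hsphere : ((2 : ℕ) + 1 : ℝ≥0∞) * volume (ball (0 : EuclideanSpace ℝ (Fin 3)) 1) =
      ENNReal.ofReal (4 * π) := by
    rw [EuclideanSpace.volume_ball_fin_three, ENNReal.ofReal_one, one_pow, one_mul,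
      show ((2 : ℕ) + 1 : ℝ≥0∞) = ENNReal.ofReal 3 by norm_num, ← ENNReal.ofReal_mul (by norm_num)]
    ring_nf
  have h := setLIntegral_norm_rpow_le (volume : Measure (EuclideanSpace ℝ (Fin 3))) (d := 2)
    (by simp) (a := a) ht hρ hb
  rw [hsphere, ← ENNReal.ofReal_mul (by positivity)] at h
  simpa [mul_assoc] using h

theorem setLIntegral_prod_norm_rpow_le {n : ℕ} {t ρ s c : ℝ} (ht : 0 ≤ t) (hρ : 0 ≤ ρ)
    (hs : 0 ≤ s) :
    ∫⁻ k : Fin (n + 1) → EuclideanSpace ℝ (Fin 3) in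
        {k | c ≤ s + ∑ i, ‖k i‖ ∧ s + ∑ i, ‖k i‖ ≤ ρ}, ∏ i, ENNReal.ofReal (‖k i‖ ^ (t - 2)) ≤
      ENNReal.ofReal (4 * π * ρ ^ t * (ρ - c)) * ENNReal.ofReal (4 * π * ρ ^ t * ρ) ^ n := by
  refine (setLIntegral_prod_le_of_sum_norm_mem_Icc volume (by fun_prop)
    (C := ENNReal.ofReal (4 * π * ρ ^ t * (ρ - c))) fun T hT =>
    (setLIntegral_norm_rpow_sub_two_le ht hρ (by linarith)).trans_eq ?_).trans ?_
  · ring_nf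
  · gcongr
    refine (setLIntegral_norm_rpow_sub_two_le ht hρ (by linarith)).trans
      (ENNReal.ofReal_le_ofReal ?_)
    gcongr
    linarith

theorem setIntegral_prod_norm_rpow_le {n : ℕ} {t ρ s c : ℝ} (ht : 0 ≤ t) (hρ : 0 ≤ ρ)
    (hs : 0 ≤ s) (hc : c ≤ ρ) :
    ∫ k : Fin (n + 1) → EuclideanSpace ℝ (Fin 3) in
        {k | c ≤ s + ∑ i, ‖k i‖ ∧ s + ∑ i, ‖k i‖ ≤ ρ}, ∏ i, ‖k i‖ ^ (t - 2) ≤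
      4 * π * ρ ^ t * (ρ - c) * (4 * π * ρ ^ t * ρ) ^ n := by
  have hc' : 0 ≤ ρ - c := sub_nonneg.2 hc
  rw [integral_eq_lintegral_of_nonneg_ae (ae_of_all _ fun k => by positivity)
    (by fun_prop : Measurable fun k : Fin (n + 1) → EuclideanSpace ℝ (Fin 3) =>
      ∏ i, ‖k i‖ ^ (t - 2)).aestronglyMeasurable]
  refine ENNReal.toReal_le_of_le_ofReal (by positivity) ?_
  simp_rw [ENNReal.ofReal_prod_of_nonneg fun i _ => Real.rpow_nonneg (norm_nonneg _) _]
  refine (setLIntegral_prod_norm_rpow_le ht hρ hs).trans_eq ?_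
  rw [← ENNReal.ofReal_pow (by positivity), ← ENNReal.ofReal_mul (by positivity)]

/-- (Momentum-shell integral estimate.)  For `μ ∈ (0,1)`, `ρ > 0`,
`α ≥ 0`, `m ≥ 1` and `s ∈ [0, ρ]`, the integral of `∏ |kⁱ|^{μ-2}` over the shell
`{k ∈ (ℝ³)ᵐ : e^{-α} ρ ≤ s + Σ|kⁱ| ≤ ρ}` is at most
`(4πρ^{1+μ})^{m-1} · 4π(1 - e^{-α}) ρ^{1+μ}`, hence at most `(4πρ^{1+μ})^m · α`. -/
theorem momentum_shell_integral_estimate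
    (μ ρ α s : ℝ) (m : ℕ)
    (hμ : μ ∈ Set.Ioo (0 : ℝ) 1) (hρ : 0 < ρ) (hα : 0 ≤ α) (hm : 1 ≤ m)
    (hs : s ∈ Set.Icc (0 : ℝ) ρ) :
    (∫ k : Fin m → EuclideanSpace ℝ (Fin 3) in
        {k | Real.exp (-α) * ρ ≤ s + ∑ i, ‖k i‖ ∧ s + ∑ i, ‖k i‖ ≤ ρ},
        ∏ i, ‖k i‖ ^ (μ - 2)) ≤
      (4 * Real.pi * ρ ^ (1 + μ)) ^ (m - 1) *
        (4 * Real.pi * (1 - Real.exp (-α)) * ρ ^ (1 + μ)) ∧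
    (∫ k : Fin m → EuclideanSpace ℝ (Fin 3) in
        {k | Real.exp (-α) * ρ ≤ s + ∑ i, ‖k i‖ ∧ s + ∑ i, ‖k i‖ ≤ ρ},
        ∏ i, ‖k i‖ ^ (μ - 2)) ≤
      (4 * Real.pi * ρ ^ (1 + μ)) ^ m * α := by
  obtain ⟨n, rfl⟩ := Nat.exists_eq_add_of_le' hm
  have hexp : Real.exp (-α) ≤ 1 := Real.exp_le_one_iff.2 (neg_nonpos.2 hα)
  have hbound := setIntegral_prod_norm_rpow_le (n := n) hμ.1.le hρ.le hs.1
    (mul_le_of_le_one_left hρ.le hexp)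
  have hρμ : ρ ^ (1 + μ) = ρ ^ μ * ρ := by rw [Real.rpow_add hρ, Real.rpow_one, mul_comm]
  have hfirst : ∫ k : Fin (n + 1) → EuclideanSpace ℝ (Fin 3) in
        {k | Real.exp (-α) * ρ ≤ s + ∑ i, ‖k i‖ ∧ s + ∑ i, ‖k i‖ ≤ ρ}, ∏ i, ‖k i‖ ^ (μ - 2) ≤
      (4 * π * ρ ^ (1 + μ)) ^ n * (4 * π * (1 - Real.exp (-α)) * ρ ^ (1 + μ)) :=
    hbound.trans_eq (by rw [hρμ]; ring)
  refine ⟨hfirst, hfirst.trans ?_⟩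
  calc _ = (4 * π * ρ ^ (1 + μ)) ^ (n + 1) * (1 - Real.exp (-α)) := by ring
    _ ≤ (4 * π * ρ ^ (1 + μ)) ^ (n + 1) * α := by
        gcongr
        linarith [Real.add_one_le_exp (-α)]
end

section
/- (Shifted-indicator integral estimate.) Let N ≥ 1 be an integer, R > 0, c ≤ d real numbers, t ∈ ℝ, and h > 0. Then ∫_{[0,R]^N} |χ_{[c,d]}(t + h + x₁ + ⋯ + x_N) − χ_{[c,d]}(t + x₁ + ⋯ + x_N)| dx₁⋯dx_N ≤ 2 h R^{N−1}, where χ_{[c,d]} denotes the indicator function of the interval [c,d]. -/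
/-!
Since `h ≥ 0`, the two indicators `χ_{[c,d]}(s + h)` and `χ_{[c,d]}(s)` can only differ for `s`
in `[c - h, c] ∪ [d - h, d]`, so the one-dimensional `L¹` distance between them is at most `2h`.
Integrating out the first coordinate of `x ∈ [0,R]^(n+1)` by Tonelli, with the others fixed,
reduces the `N`-dimensional integral of any `g (∑ xᵢ)` to that one-dimensional integral
times the volume `Rⁿ` of the remaining face. Bounding the Bochner integral by the lower Lebesgue
integral of the norm means no integrability or measurability has to be checked.
-/

open MeasureTheory Set
open scoped ENNReal

theorem lintegral_pi_comp_sum_le (n : ℕ) (s : Set ℝ) (g : ℝ → ℝ≥0∞) :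
    ∫⁻ x : Fin (n + 1) → ℝ in univ.pi fun _ => s, g (∑ i, x i) ≤
      (∫⁻ y, g y) * volume s ^ n := by
  let μ : Fin (n + 1) → Measure ℝ := fun _ => volume.restrict s
  have hsplit := (measurePreserving_piFinSuccAbove μ 0).symm
  rw [volume_pi, Measure.restrict_pi_pi,
    ← hsplit.lintegral_comp_emb (MeasurableEquiv.measurableEmbedding _), ← lintegral_prod_swap]
  calc _ ≤ ∫⁻ y : Fin n → ℝ, (∫⁻ x in s, g (x + ∑ j, y j))
          ∂Measure.pi fun _ => volume.restrict s := by
        refine (lintegral_prod_le _).trans_eq ?_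
        simp [Fin.sum_univ_succ, μ]
    _ ≤ ∫⁻ _ : Fin n → ℝ, (∫⁻ y, g y) ∂Measure.pi fun _ => volume.restrict s := by
        refine lintegral_mono fun y => ?_
        exact (setLIntegral_le_lintegral _ _).trans_eq (lintegral_add_right_eq_self g _)
    _ = (∫⁻ y, g y) * volume s ^ n := by
        simp [lintegral_const, Measure.pi_univ]

theorem enorm_indicator_Icc_add_sub_le (c d h s : ℝ) (hh : 0 ≤ h) :
    ‖(Icc c d).indicator (fun _ => (1 : ℝ)) (s + h) - (Icc c d).indicator (fun _ => 1) s‖ₑ ≤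
      (Icc (c - h) c ∪ Icc (d - h) d).indicator 1 s := by
  simp only [indicator_apply, mem_union, mem_Icc]
  split_ifs <;> simp <;> grind

theorem lintegral_enorm_indicator_Icc_shift_sub_le (c d t h : ℝ) (hh : 0 ≤ h) :
    ∫⁻ s, ‖(Icc c d).indicator (fun _ => (1 : ℝ)) (t + h + s) -
        (Icc c d).indicator (fun _ => 1) (t + s)‖ₑ ≤ ENNReal.ofReal (2 * h) :=
  calc _ ≤ ∫⁻ s, (Icc (c - h) c ∪ Icc (d - h) d).indicator 1 (t + s) :=
        lintegral_mono fun s => by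
          simpa only [add_right_comm] using enorm_indicator_Icc_add_sub_le c d h (t + s) hh
    _ = volume (Icc (c - h) c ∪ Icc (d - h) d) := by
        rw [lintegral_add_left_eq_self (fun s => _) t,
          lintegral_indicator_one (measurableSet_Icc.union measurableSet_Icc)]
    _ ≤ volume (Icc (c - h) c) + volume (Icc (d - h) d) := measure_union_le _ _
    _ = ENNReal.ofReal (2 * h) := by
        rw [Real.volume_Icc, Real.volume_Icc, sub_sub_cancel, sub_sub_cancel,
          ← ENNReal.ofReal_add hh hh, two_mul]

theorem shifted_indicator_integral_estimate_general
    (N : ℕ) (R c d t h : ℝ)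
    (hN : 1 ≤ N) (hR : 0 < R) (hh : 0 < h) :
    (∫ x : Fin N → ℝ in Set.univ.pi (fun _ => Set.Icc (0 : ℝ) R),
        |Set.indicator (Set.Icc c d) (fun _ => (1 : ℝ)) (t + h + ∑ i, x i) -
          Set.indicator (Set.Icc c d) (fun _ => (1 : ℝ)) (t + ∑ i, x i)|) ≤
      2 * h * R ^ (N - 1) := by
  obtain ⟨n, rfl⟩ := Nat.exists_eq_add_of_le' hN
  have hlint := lintegral_pi_comp_sum_le n (Icc 0 R) fun s =>
    ‖(Icc c d).indicator (fun _ => (1 : ℝ)) (t + h + s) - (Icc c d).indicator (fun _ => 1) (t + s)‖ₑ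
  rw [Real.volume_Icc, sub_zero, ← ENNReal.ofReal_pow hR.le] at hlint
  calc _ ≤ ‖∫ x : Fin (n + 1) → ℝ in univ.pi (fun _ => Icc 0 R),
          |(Icc c d).indicator (fun _ => (1 : ℝ)) (t + h + ∑ i, x i) -
            (Icc c d).indicator (fun _ => 1) (t + ∑ i, x i)|‖ := Real.le_norm_self _
    _ ≤ (∫⁻ x : Fin (n + 1) → ℝ in univ.pi (fun _ => Icc 0 R),
          ‖(Icc c d).indicator (fun _ => (1 : ℝ)) (t + h + ∑ i, x i) -
            (Icc c d).indicator (fun _ => 1) (t + ∑ i, x i)‖ₑ).toReal := by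
        refine (norm_integral_le_lintegral_norm _).trans_eq ?_
        simp only [Real.norm_eq_abs, abs_abs, Real.enorm_eq_ofReal_abs]
    _ ≤ 2 * h * R ^ (n + 1 - 1) := by
        refine ENNReal.toReal_le_of_le_ofReal (by positivity) (hlint.trans ?_)
        rw [Nat.add_sub_cancel, ENNReal.ofReal_mul (by positivity)]
        gcongr
        exact lintegral_enorm_indicator_Icc_shift_sub_le c d t h hh.le

/-- (Shifted-indicator integral estimate.)  For an integer
`N ≥ 1`, `R > 0`, reals `c ≤ d`, `t ∈ ℝ` and `h > 0`:
`∫_{[0,R]^N} |χ_{[c,d]}(t + h + Σxᵢ) - χ_{[c,d]}(t + Σxᵢ)| dx ≤ 2 h R^{N-1}`. -/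
theorem shifted_indicator_integral_estimate
    (N : ℕ) (R c d t h : ℝ)
    (hN : 1 ≤ N) (hR : 0 < R) (hcd : c ≤ d) (hh : 0 < h) :
    (∫ x : Fin N → ℝ in Set.univ.pi (fun _ => Set.Icc (0 : ℝ) R),
        |Set.indicator (Set.Icc c d) (fun _ => (1 : ℝ)) (t + h + ∑ i, x i) -
          Set.indicator (Set.Icc c d) (fun _ => (1 : ℝ)) (t + ∑ i, x i)|) ≤
      2 * h * R ^ (N - 1) :=
  shifted_indicator_integral_estimate_general N R c d t h hN hR hh
end

section
/- (Combinatorial bound for the Wick-expansion sum.) Let L ≥ 1 and m, n ≥ 0 be integers, and let t be a real number with 0 ≤ t ≤ 1/4. Then the sum ∑_{(m̄,n̄,p̄,q̄) ∈ B_L(m,n)} ∏_{ℓ=1}^L binom(m_ℓ + p_ℓ, p_ℓ) · binom(n_ℓ + q_ℓ, q_ℓ) · t^{p_ℓ + q_ℓ} converges and is at most 4^{m+n} · (2⁴)^L. -/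
/-!
Bound each factor of the product using `C(a+p, p) ≤ 2^(a+p)` and `t ≤ 1/4`:
`C(a+p, p) C(b+q, q) t^(p+q) ≤ 4^(a+b) 2^-(a+b+p+q)`. Over `ℓ`, the constraints `Σ m_ℓ = m`,
`Σ n_ℓ = n` collect the powers of `4` into `4^(m+n)`, and what remains is the geometric weight
`2^-(sum of all 4L entries)`. Summed over all quadruples, ignoring the remaining constraint, this
weight factors into `4L` geometric series, each with sum `2`.
-/

/-- The index set `B_L(m,n)`: quadruples `(m̄, n̄, p̄, q̄)` of `L`-tuples of
nonnegative integers with `Σ m_ℓ = m`, `Σ n_ℓ = n` and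
`m_ℓ + n_ℓ + p_ℓ + q_ℓ ≥ 1` for all `ℓ`. -/
def BL (L m n : ℕ) : Set ((Fin L → ℕ) × (Fin L → ℕ) × (Fin L → ℕ) × (Fin L → ℕ)) :=
  {v | (∑ ℓ, v.1 ℓ) = m ∧ (∑ ℓ, v.2.1 ℓ) = n ∧
    ∀ ℓ, 1 ≤ v.1 ℓ + v.2.1 ℓ + v.2.2.1 ℓ + v.2.2.2 ℓ}

/-- The summand `∏_ℓ C(m_ℓ+p_ℓ, p_ℓ) C(n_ℓ+q_ℓ, q_ℓ) t^{p_ℓ+q_ℓ}`. -/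
noncomputable def wickTerm (L : ℕ) (t : ℝ)
    (v : (Fin L → ℕ) × (Fin L → ℕ) × (Fin L → ℕ) × (Fin L → ℕ)) : ℝ :=
  ∏ ℓ, ((Nat.choose (v.1 ℓ + v.2.2.1 ℓ) (v.2.2.1 ℓ) : ℝ) *
    (Nat.choose (v.2.1 ℓ + v.2.2.2 ℓ) (v.2.2.2 ℓ) : ℝ) * t ^ (v.2.2.1 ℓ + v.2.2.2 ℓ))

open Finset

section GeometricProduct

variable {ι : Type*} [Fintype ι] {r : ℝ}

theorem sum_prod_pow_le_inv_one_sub_pow (hr₀ : 0 ≤ r) (hr₁ : r < 1) (u : Finset (ι → ℕ)) :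
    ∑ x ∈ u, ∏ i, r ^ x i ≤ (1 - r)⁻¹ ^ Fintype.card ι := by
  classical
  obtain ⟨M, hM⟩ := u.bddAbove
  have hsub : u ⊆ Fintype.piFinset fun i => range (M i + 1) := fun x hx =>
    Fintype.mem_piFinset.2 fun i => mem_range.2 (Nat.lt_succ_of_le (hM hx i))
  have hgeom (N : ℕ) : ∑ j ∈ range N, r ^ j ≤ (1 - r)⁻¹ :=
    tsum_geometric_of_lt_one hr₀ hr₁ ▸
      (summable_geometric_of_lt_one hr₀ hr₁).sum_le_tsum _ fun _ _ => pow_nonneg hr₀ _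
  calc ∑ x ∈ u, ∏ i, r ^ x i
      ≤ ∑ x ∈ Fintype.piFinset fun i => range (M i + 1), ∏ i, r ^ x i :=
        sum_le_sum_of_subset_of_nonneg hsub fun _ _ _ => by positivity
    _ = ∏ i, ∑ j ∈ range (M i + 1), r ^ j := (prod_univ_sum _ _).symm
    _ ≤ ∏ _i : ι, (1 - r)⁻¹ := prod_le_prod (fun _ _ => by positivity) fun _ _ => hgeom _
    _ = (1 - r)⁻¹ ^ Fintype.card ι := by rw [prod_const, card_univ]

theorem summable_prod_pow (hr₀ : 0 ≤ r) (hr₁ : r < 1) :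
    Summable fun x : ι → ℕ => ∏ i, r ^ x i :=
  summable_of_sum_le (fun _ => by positivity) (sum_prod_pow_le_inv_one_sub_pow hr₀ hr₁)

theorem tsum_prod_pow_le (hr₀ : 0 ≤ r) (hr₁ : r < 1) :
    ∑' x : ι → ℕ, ∏ i, r ^ x i ≤ (1 - r)⁻¹ ^ Fintype.card ι :=
  (summable_prod_pow hr₀ hr₁).tsum_le_of_sum_le (sum_prod_pow_le_inv_one_sub_pow hr₀ hr₁)

end GeometricProduct

def Equiv.prodArrowEquivSumArrow₄ (α β γ δ M : Type*) :
    (α → M) × (β → M) × (γ → M) × (δ → M) ≃ (α ⊕ β ⊕ γ ⊕ δ → M) where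
  toFun v := Sum.elim v.1 (Sum.elim v.2.1 (Sum.elim v.2.2.1 v.2.2.2))
  invFun x := (x ∘ .inl, x ∘ .inr ∘ .inl, x ∘ .inr ∘ .inr ∘ .inl, x ∘ .inr ∘ .inr ∘ .inr)
  left_inv _ := rfl
  right_inv x := by ext (_ | _ | _ | _) <;> rfl

theorem Equiv.prod_prodArrowEquivSumArrow₄ {α β γ δ M N : Type*} [Fintype α] [Fintype β]
    [Fintype γ] [Fintype δ] [CommMonoid N] (f : M → N)
    (v : (α → M) × (β → M) × (γ → M) × (δ → M)) :
    ∏ i, f (prodArrowEquivSumArrow₄ α β γ δ M v i) =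
      (∏ a, f (v.1 a)) * ((∏ b, f (v.2.1 b)) * ((∏ c, f (v.2.2.1 c)) * ∏ d, f (v.2.2.2 d))) := by
  simp only [Fintype.prod_sum_type]
  rfl

theorem choose_mul_choose_mul_pow_le (a b p q : ℕ) {t : ℝ} (ht₀ : 0 ≤ t) (ht₁ : t ≤ 1 / 4) :
    ((a + p).choose p : ℝ) * (b + q).choose q * t ^ (p + q) ≤
      4 ^ (a + b) * ((1 / 2) ^ a * ((1 / 2) ^ b * ((1 / 2) ^ p * (1 / 2) ^ q))) := by
  have hc₁ : ((a + p).choose p : ℝ) ≤ 2 ^ (a + p) := by exact_mod_cast Nat.choose_le_two_pow _ _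
  have hc₂ : ((b + q).choose q : ℝ) ≤ 2 ^ (b + q) := by exact_mod_cast Nat.choose_le_two_pow _ _
  have ht : t ^ (p + q) ≤ (1 / 4) ^ (p + q) := pow_le_pow_left₀ ht₀ ht₁ _
  calc ((a + p).choose p : ℝ) * (b + q).choose q * t ^ (p + q)
      ≤ 2 ^ (a + p) * 2 ^ (b + q) * (1 / 4) ^ (p + q) := by gcongr
    _ = 4 ^ (a + b) * ((1 / 2) ^ a * ((1 / 2) ^ b * ((1 / 2) ^ p * (1 / 2) ^ q))) := by
      simp only [pow_add, div_pow, one_pow, show (4 : ℝ) = 2 ^ 2 by norm_num, ← pow_mul]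
      field_simp
      ring

theorem wickTerm_le {L m n : ℕ} {t : ℝ} (ht₀ : 0 ≤ t) (ht₁ : t ≤ 1 / 4)
    {v : (Fin L → ℕ) × (Fin L → ℕ) × (Fin L → ℕ) × (Fin L → ℕ)} (hv : v ∈ BL L m n) :
    wickTerm L t v ≤
      4 ^ (m + n) * ∏ i, (1 / 2 : ℝ) ^ Equiv.prodArrowEquivSumArrow₄ _ _ _ _ ℕ v i := by
  obtain ⟨hm, hn, -⟩ := hv
  calc wickTerm L t v ≤ ∏ ℓ, (4 : ℝ) ^ (v.1 ℓ + v.2.1 ℓ) * ((1 / 2) ^ v.1 ℓ *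
        ((1 / 2) ^ v.2.1 ℓ * ((1 / 2) ^ v.2.2.1 ℓ * (1 / 2) ^ v.2.2.2 ℓ))) :=
      prod_le_prod (fun _ _ => by positivity) fun ℓ _ =>
        choose_mul_choose_mul_pow_le _ _ _ _ ht₀ ht₁
    _ = _ := by
      rw [Equiv.prod_prodArrowEquivSumArrow₄ (fun k => (1 / 2 : ℝ) ^ k), prod_mul_distrib,
        prod_pow_eq_pow_sum, sum_add_distrib, hm, hn]
      simp only [prod_mul_distrib]

theorem summable_and_tsum_le_of_le_comp {α β : Type*} {f : α → ℝ} {g : β → ℝ} {i : α → β}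
    (hi : Function.Injective i) (hf : ∀ a, 0 ≤ f a) (hg : ∀ b, 0 ≤ g b) (hgs : Summable g)
    (hfg : ∀ a, f a ≤ g (i a)) :
    Summable f ∧ ∑' a, f a ≤ ∑' b, g b := by
  have hgi : Summable (g ∘ i) := hgs.comp_injective hi
  have hfs : Summable f := hgi.of_nonneg_of_le hf hfg
  exact ⟨hfs, (hfs.tsum_le_tsum hfg hgi).trans (tsum_comp_le_tsum_of_inj hgs hg hi)⟩

theorem wick_sum_combinatorial_bound_general
    (L m n : ℕ) (t : ℝ) (ht : 0 ≤ t) (ht' : t ≤ 1 / 4) :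
    Summable (fun v : BL L m n => wickTerm L t v.val) ∧
    ∑' v : BL L m n, wickTerm L t v.val ≤ 4 ^ (m + n) * (2 ^ 4) ^ L := by
  set e := Equiv.prodArrowEquivSumArrow₄ (Fin L) (Fin L) (Fin L) (Fin L) ℕ
  set w : (Fin L ⊕ Fin L ⊕ Fin L ⊕ Fin L → ℕ) → ℝ := fun x => ∏ i, (1 / 2 : ℝ) ^ x i
  have hw : Summable w := summable_prod_pow (by norm_num) (by norm_num)
  obtain ⟨hsum, hle⟩ := summable_and_tsum_le_of_le_comp (e.injective.comp Subtype.val_injective)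
    (fun v => prod_nonneg fun _ _ => by positivity) (fun _ => by positivity)
    (hw.mul_left (4 ^ (m + n))) fun v : BL L m n => wickTerm_le ht ht' v.2
  refine ⟨hsum, hle.trans ?_⟩
  rw [tsum_mul_left]
  gcongr
  calc ∑' x, w x ≤ (1 - 1 / 2)⁻¹ ^ Fintype.card (Fin L ⊕ Fin L ⊕ Fin L ⊕ Fin L) :=
        tsum_prod_pow_le (by norm_num) (by norm_num)
    _ = (2 ^ 4) ^ L := by
        rw [Fintype.card_sum, Fintype.card_sum, Fintype.card_sum, Fintype.card_fin,
          show L + (L + (L + L)) = 4 * L by ring, pow_mul]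
        norm_num

/-- (Combinatorial bound for the Wick-expansion sum.)  For
`L ≥ 1`, `m, n ≥ 0` and `0 ≤ t ≤ 1/4`, the sum
`∑_{(m̄,n̄,p̄,q̄) ∈ B_L(m,n)} ∏_ℓ C(m_ℓ+p_ℓ,p_ℓ) C(n_ℓ+q_ℓ,q_ℓ) t^{p_ℓ+q_ℓ}`
converges and is at most `4^{m+n} (2⁴)^L`. -/
theorem wick_sum_combinatorial_bound
    (L m n : ℕ) (t : ℝ) (hL : 1 ≤ L) (ht : 0 ≤ t) (ht' : t ≤ 1 / 4) :
    Summable (fun v : BL L m n => wickTerm L t v.val) ∧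
    ∑' v : BL L m n, wickTerm L t v.val ≤ 4 ^ (m + n) * (2 ^ 4) ^ L :=
  wick_sum_combinatorial_bound_general L m n t ht ht'
end
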